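/- arXiv:1602.08608 — 8 statements merged into one kernel-verified Lean document; each statement's English description precedes it below -/
import Mathlib

section
/- Let H be a separable Hilbert space decomposed as H = H₁ ⊕ ⋯ ⊕ H_κ (κ finite), let ℓ ∈ ℕ, and let x₁, …, x_m ∈ H. Consider the class D_ℓ of subspaces S ⊆ H with dim S ≤ ℓ and P_{H_i}(S) ⊆ S for all i. Then there exists S* ∈ D_ℓ such that Σ_{j=1}^m ‖x_j − P_{S*} x_j‖² ≤ Σ_{j=1}^m ‖x_j − P_S x_j‖² for every S ∈ D_ℓ. -/
open scoped ComplexInnerProductSpace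

/-!
Let `W` be the span of the `xⱼ` and of all `P_{Hᵢ} xⱼ`. It is finite-dimensional, and since the
`Hᵢ` are mutually orthogonal it is invariant under every `P_{Hᵢ}`; as these are symmetric, `P_W`
commutes with them. Replacing a competitor `S` by `P_W(S)` therefore keeps it in `D_ℓ`, and it
does not increase the distances to the `xⱼ ∈ W` because `P_W` is `1`-Lipschitz and fixes them.
It remains to minimize over subspaces of `W`: their orthogonal projections form a compact set of
operators on `W`, on which the cost `P ↦ ∑ⱼ ‖xⱼ - P xⱼ‖²` is continuous.
-/

open Module Module.End Submodule Metric

section FiniteDimensional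

variable {𝕜 W ι : Type*} [RCLike 𝕜] [NormedAddCommGroup W] [InnerProductSpace 𝕜 W]

/-- On star projections the trace is the rank, so bounding it is a closed condition. -/
def ContinuousLinearMap.invtStarProjections [CompleteSpace W] (T : ι → W →L[𝕜] W) (ℓ : ℕ) :
    Set (W →L[𝕜] W) :=
  {P | IsStarProjection P ∧ RCLike.re (LinearMap.trace 𝕜 W P) ≤ ℓ ∧
    ∀ i, P ∘L T i ∘L P = T i ∘L P}

variable [FiniteDimensional 𝕜 W]

lemma ContinuousLinearMap.continuous_trace :
    Continuous fun P : W →L[𝕜] W => LinearMap.trace 𝕜 W P :=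
  ((LinearMap.trace 𝕜 W).comp (ContinuousLinearMap.coeLM 𝕜)).continuous_of_finiteDimensional

lemma Submodule.trace_starProjection (S : Submodule 𝕜 W) :
    LinearMap.trace 𝕜 W S.starProjection = finrank 𝕜 S :=
  LinearMap.IsProj.trace ⟨S.starProjection_apply_mem, fun _ => starProjection_eq_self_iff.mpr⟩

open ContinuousLinearMap

variable [CompleteSpace W]

lemma Submodule.starProjection_mem_invtStarProjections_iff {T : ι → W →L[𝕜] W} {ℓ : ℕ}
    (S : Submodule 𝕜 W) :
    S.starProjection ∈ invtStarProjections T ℓ ↔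
      finrank 𝕜 S ≤ ℓ ∧ ∀ i, S ∈ invtSubmodule (T i : W →ₗ[𝕜] W) := by
  have hinv (i : ι) : S ∈ invtSubmodule (T i : W →ₗ[𝕜] W) ↔
      S.starProjection ∘L T i ∘L S.starProjection = T i ∘L S.starProjection := by
    conv_lhs => rw [← range_starProjection S]
    exact IsIdempotentElem.range_mem_invtSubmodule_iff S.isIdempotentElem_starProjection
  simp [invtStarProjections, trace_starProjection, hinv]

lemma ContinuousLinearMap.isCompact_invtStarProjections (T : ι → W →L[𝕜] W) (ℓ : ℕ) :
    IsCompact (invtStarProjections T ℓ) := by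
  have : ProperSpace (W →L[𝕜] W) := FiniteDimensional.proper 𝕜 _
  refine isCompact_of_isClosed_isBounded ?_ ?_
  · simp only [invtStarProjections, isStarProjection_iff, IsIdempotentElem, IsSelfAdjoint,
      Set.ofPred_and, Set.ofPred_forall]
    refine ((isClosed_eq (continuous_id.mul continuous_id) continuous_id).inter
      (isClosed_eq continuous_star continuous_id)).inter
      ((isClosed_le (RCLike.continuous_re.comp continuous_trace) continuous_const).inter
      (isClosed_iInter fun i => isClosed_eq ?_ ?_))
    all_goals fun_prop
  · exact isBounded_iff_forall_norm_le.mpr ⟨1, fun P hP => hP.1.norm_le⟩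

theorem Submodule.exists_forall_le_comp_starProjection (T : ι → W →L[𝕜] W) (ℓ : ℕ)
    {g : (W →L[𝕜] W) → ℝ} (hg : Continuous g) :
    ∃ S : Submodule 𝕜 W, finrank 𝕜 S ≤ ℓ ∧ (∀ i, S ∈ invtSubmodule (T i : W →ₗ[𝕜] W)) ∧
      ∀ S' : Submodule 𝕜 W, finrank 𝕜 S' ≤ ℓ → (∀ i, S' ∈ invtSubmodule (T i : W →ₗ[𝕜] W)) →
        g S.starProjection ≤ g S'.starProjection := by
  have hbot : (⊥ : Submodule 𝕜 W).starProjection ∈ invtStarProjections T ℓ :=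
    (starProjection_mem_invtStarProjections_iff ⊥).mpr ⟨by simp, fun i => invtSubmodule.bot_mem _⟩
  obtain ⟨P, hP, hmin⟩ :=
    (isCompact_invtStarProjections T ℓ).exists_isMinOn ⟨_, hbot⟩ hg.continuousOn
  obtain ⟨S, _, rfl⟩ := isStarProjection_iff_eq_starProjection.mp hP.1
  obtain ⟨hrank, hinv⟩ := (starProjection_mem_invtStarProjections_iff S).mp hP
  exact ⟨S, hrank, hinv, fun S' hrank' hinv' =>
    hmin ((starProjection_mem_invtStarProjections_iff S').mpr ⟨hrank', hinv'⟩)⟩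

end FiniteDimensional

section InnerProductSpace

variable {𝕜 E ι J : Type*} [RCLike 𝕜] [NormedAddCommGroup E] [InnerProductSpace 𝕜 E]

namespace Submodule

lemma commute_starProjection_of_mem_invtSubmodule {W : Submodule 𝕜 E}
    [W.HasOrthogonalProjection] {T : E →L[𝕜] E} (hT : (T : E →ₗ[𝕜] E).IsSymmetric)
    (hW : W ∈ invtSubmodule (T : E →ₗ[𝕜] E)) : Commute W.starProjection T := by
  refine (ContinuousLinearMap.IsIdempotentElem.commute_iff
    W.isIdempotentElem_starProjection).mpr ⟨?_, ?_⟩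
  · rwa [range_starProjection]
  · rw [ker_starProjection]
    exact hT.orthogonalComplement_mem_invtSubmodule hW

lemma map_starProjection_mem_invtSubmodule {W S : Submodule 𝕜 E}
    [W.HasOrthogonalProjection] {T : E →L[𝕜] E} (hT : (T : E →ₗ[𝕜] E).IsSymmetric)
    (hW : W ∈ invtSubmodule (T : E →ₗ[𝕜] E)) (hS : S ∈ invtSubmodule (T : E →ₗ[𝕜] E)) :
    S.map (W.starProjection : E →ₗ[𝕜] E) ∈ invtSubmodule (T : E →ₗ[𝕜] E) := by
  rintro _ ⟨s, hs, rfl⟩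
  refine ⟨T s, hS hs, ?_⟩
  simpa using congr($(commute_starProjection_of_mem_invtSubmodule hT hW) s)

lemma sup_iSup_map_starProjection_mem_invtSubmodule {U : ι → Submodule 𝕜 E}
    [∀ i, (U i).HasOrthogonalProjection] (hU : Pairwise fun i j => U i ⟂ U j)
    (V : Submodule 𝕜 E) (k : ι) :
    V ⊔ ⨆ i, V.map ((U i).starProjection : E →ₗ[𝕜] E) ∈
      invtSubmodule ((U k).starProjection : E →ₗ[𝕜] E) := by
  rw [mem_invtSubmodule_iff_map_le, map_sup, map_iSup]
  refine sup_le (le_sup_of_le_right (le_iSup_of_le k le_rfl)) (iSup_le fun i => ?_)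
  rw [← map_comp]
  rcases eq_or_ne k i with rfl | hki
  · rw [← ContinuousLinearMap.toLinearMap_comp, ← ContinuousLinearMap.mul_def,
      (U k).isIdempotentElem_starProjection.eq]
    exact le_sup_of_le_right (le_iSup_of_le k le_rfl)
  · rw [← ContinuousLinearMap.toLinearMap_comp, (hU hki).starProjection_comp_starProjection,
      ContinuousLinearMap.toLinearMap_zero, Submodule.map_zero]
    exact bot_le

lemma infDist_eq_norm_sub_starProjection (K : Submodule 𝕜 E) [K.HasOrthogonalProjection]
    (x : E) : infDist x (K : Set E) = ‖x - K.starProjection x‖ := by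
  rw [infDist_eq_iInf, starProjection_minimal]
  simp [dist_eq_norm]

lemma infDist_map_starProjection_le {W : Submodule 𝕜 E} [W.HasOrthogonalProjection] {x : E}
    (hx : x ∈ W) (S : Submodule 𝕜 E) :
    infDist x (S.map (W.starProjection : E →ₗ[𝕜] E) : Set E) ≤ infDist x S := by
  refine (le_infDist ⟨0, S.zero_mem⟩).mpr fun s hs => ?_
  calc infDist x (S.map (W.starProjection : E →ₗ[𝕜] E) : Set E)
      ≤ dist x (W.starProjection s) := infDist_le_dist_of_mem ⟨s, hs, rfl⟩
    _ = ‖W.starProjection (x - s)‖ := by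
        rw [dist_eq_norm, map_sub, starProjection_eq_self_iff.mpr hx]
    _ ≤ dist x s := (W.norm_starProjection_apply_le _).trans_eq (dist_eq_norm x s).symm

lemma infDist_map_subtype (W : Submodule 𝕜 E) (S : Submodule 𝕜 W) (w : W) :
    infDist (w : E) (S.map W.subtype : Set E) = infDist w (S : Set W) := by
  rw [map_coe]
  exact infDist_image W.subtypeₗᵢ.isometry

end Submodule

theorem exists_le_forall_sum_sq_infDist_le [Fintype J] {W : Submodule 𝕜 E}
    [FiniteDimensional 𝕜 W] {T : ι → Module.End 𝕜 E} (hW : ∀ i, W ∈ invtSubmodule (T i))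
    (ℓ : ℕ) {x : J → E} (hx : ∀ j, x j ∈ W) :
    ∃ S ≤ W, finrank 𝕜 S ≤ ℓ ∧ (∀ i, S ∈ invtSubmodule (T i)) ∧
      ∀ S' ≤ W, finrank 𝕜 S' ≤ ℓ → (∀ i, S' ∈ invtSubmodule (T i)) →
        ∑ j, infDist (x j) (S : Set E) ^ 2 ≤ ∑ j, infDist (x j) (S' : Set E) ^ 2 := by
  have : CompleteSpace W := FiniteDimensional.complete 𝕜 W
  let w (j : J) : W := ⟨x j, hx j⟩
  have hcost (S : Submodule 𝕜 W) : ∑ j, infDist (x j) (S.map W.subtype : Set E) ^ 2 =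
      ∑ j, ‖w j - S.starProjection (w j)‖ ^ 2 := by
    congr! 2 with j
    rw [infDist_map_subtype W S (w j), infDist_eq_norm_sub_starProjection]
  obtain ⟨S, hrank, hinv, hmin⟩ := exists_forall_le_comp_starProjection
    (fun i => LinearMap.toContinuousLinearMap ((T i).restrict (hW i))) ℓ
    (g := fun P => ∑ j, ‖w j - P (w j)‖ ^ 2) (by fun_prop)
  refine ⟨S.map W.subtype, map_subtype_le _ _, by rwa [finrank_map_subtype_eq],
    fun i => invtSubmodule.map_subtype_mem_of_mem_invtSubmodule (T i) (hW i)
      (by simpa only [LinearMap.coe_toContinuousLinearMap] using hinv i),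
    fun S' hS'W hrank' hinv' => ?_⟩
  have hS' : (S'.comap W.subtype).map W.subtype = S' := by
    rw [map_comap_subtype, inf_of_le_right hS'W]
  rw [← hS', hcost, hcost]
  exact hmin _ (by rwa [← finrank_map_subtype_eq, hS']) fun i _ hv => hinv' i hv

theorem exists_forall_sum_sq_infDist_le_of_pairwise_isOrtho [Finite ι] [Fintype J]
    (U : ι → Submodule 𝕜 E) [∀ i, (U i).HasOrthogonalProjection]
    (hU : Pairwise fun i j => U i ⟂ U j) (ℓ : ℕ) (x : J → E) :
    ∃ S : Submodule 𝕜 E, FiniteDimensional 𝕜 S ∧ finrank 𝕜 S ≤ ℓ ∧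
      (∀ i, S ∈ invtSubmodule ((U i).starProjection : E →ₗ[𝕜] E)) ∧
      ∀ S' : Submodule 𝕜 E, FiniteDimensional 𝕜 S' → finrank 𝕜 S' ≤ ℓ →
        (∀ i, S' ∈ invtSubmodule ((U i).starProjection : E →ₗ[𝕜] E)) →
        ∑ j, infDist (x j) (S : Set E) ^ 2 ≤ ∑ j, infDist (x j) (S' : Set E) ^ 2 := by
  set V := span 𝕜 (Set.range x)
  have : FiniteDimensional 𝕜 V := FiniteDimensional.span_of_finite 𝕜 (Set.finite_range x)
  set W := V ⊔ ⨆ i, V.map ((U i).starProjection : E →ₗ[𝕜] E)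
  have : CompleteSpace W := FiniteDimensional.complete 𝕜 W
  have hW := sup_iSup_map_starProjection_mem_invtSubmodule hU V
  have hx (j : J) : x j ∈ W := mem_sup_left (subset_span ⟨j, rfl⟩)
  obtain ⟨S, hSW, hrank, hinv, hmin⟩ := exists_le_forall_sum_sq_infDist_le hW ℓ hx
  refine ⟨S, finiteDimensional_of_le hSW, hrank, hinv, fun S' _ hrank' hinv' => ?_⟩
  calc ∑ j, infDist (x j) (S : Set E) ^ 2
      ≤ ∑ j, infDist (x j) (S'.map (W.starProjection : E →ₗ[𝕜] E) : Set E) ^ 2 :=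
        hmin _ (LinearMap.map_le_range.trans_eq W.range_starProjection)
          ((finrank_map_le _ _).trans hrank')
          fun i => map_starProjection_mem_invtSubmodule (starProjection_isSymmetric _) (hW i)
            (hinv' i)
    _ ≤ ∑ j, infDist (x j) (S' : Set E) ^ 2 := Finset.sum_le_sum fun j _ =>
        pow_le_pow_left₀ infDist_nonneg (infDist_map_starProjection_le (hx j) S') 2

end InnerProductSpace

theorem exists_optimal_decomposable_subspace_general
    {H : Type*} [NormedAddCommGroup H] [InnerProductSpace ℂ H]
    (κ : ℕ) (Hsub : Fin κ → Submodule ℂ H) [instH : ∀ i, CompleteSpace (Hsub i)]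
    (horth : ∀ i j, i ≠ j → ∀ x ∈ Hsub i, ∀ y ∈ Hsub j, ⟪x, y⟫ = 0)
    (ℓ m : ℕ) (x : Fin m → H) :
    ∃ Sstar : Submodule ℂ H, FiniteDimensional ℂ Sstar ∧ Module.finrank ℂ Sstar ≤ ℓ ∧
      (∀ i, Sstar.map
        (((Hsub i).subtypeL.comp (Hsub i).orthogonalProjectionOnto).toLinearMap) ≤ Sstar) ∧
      ∀ S : Submodule ℂ H, FiniteDimensional ℂ S → Module.finrank ℂ S ≤ ℓ →
        (∀ i, S.map
          (((Hsub i).subtypeL.comp (Hsub i).orthogonalProjectionOnto).toLinearMap) ≤ S) →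
        ∑ j, (Metric.infDist (x j) (Sstar : Set H)) ^ 2 ≤
          ∑ j, (Metric.infDist (x j) (S : Set H)) ^ 2 := by
  have hortho : Pairwise fun i j => Hsub i ⟂ Hsub j := fun i j hij =>
    isOrtho_iff_inner_eq.mpr (horth i j hij)
  have h := exists_forall_sum_sq_infDist_le_of_pairwise_isOrtho Hsub hortho ℓ x
  simp only [mem_invtSubmodule_iff_map_le] at h
  exact h

/-- Existence of an optimal subspace in the class `D_ℓ` of subspaces of dimension at most
`ℓ` that are invariant under the projections of an orthogonal decomposition
`H = H₁ ⊕ ⋯ ⊕ H_κ`: there is `S* ∈ D_ℓ` minimizing `Σⱼ ‖xⱼ − P_S xⱼ‖²` (expressed via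
distances, since `‖x − P_S x‖ = dist x S` for a closed subspace). -/
theorem exists_optimal_decomposable_subspace
    {H : Type*} [NormedAddCommGroup H] [InnerProductSpace ℂ H] [CompleteSpace H]
    [SecondCountableTopology H]
    (κ : ℕ) (Hsub : Fin κ → Submodule ℂ H) [instH : ∀ i, CompleteSpace (Hsub i)]
    (horth : ∀ i j, i ≠ j → ∀ x ∈ Hsub i, ∀ y ∈ Hsub j, ⟪x, y⟫ = 0)
    (hspan : (⨆ i, Hsub i).topologicalClosure = ⊤)
    (ℓ m : ℕ) (x : Fin m → H) :
    ∃ Sstar : Submodule ℂ H, FiniteDimensional ℂ Sstar ∧ Module.finrank ℂ Sstar ≤ ℓ ∧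
      (∀ i, Sstar.map
        (((Hsub i).subtypeL.comp (Hsub i).orthogonalProjectionOnto).toLinearMap) ≤ Sstar) ∧
      ∀ S : Submodule ℂ H, FiniteDimensional ℂ S → Module.finrank ℂ S ≤ ℓ →
        (∀ i, S.map
          (((Hsub i).subtypeL.comp (Hsub i).orthogonalProjectionOnto).toLinearMap) ≤ S) →
        ∑ j, (Metric.infDist (x j) (Sstar : Set H)) ^ 2 ≤
          ∑ j, (Metric.infDist (x j) (S : Set H)) ^ 2 :=
  exists_optimal_decomposable_subspace_general κ Hsub (instH := instH) horth ℓ m x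
end

section
/- Let (Ω, μ) be a σ-finite measure space, H a separable Hilbert space, and J a measurable range function (ω ↦ J(ω), a closed subspace of H, with ω ↦ ⟨P_{J(ω)} a, b⟩ measurable for all a, b ∈ H). Let M = {Φ ∈ L²(Ω, H) : Φ(ω) ∈ J(ω) a.e.}. Then M is a closed subspace of L²(Ω, H) and for every Φ ∈ L²(Ω, H), the orthogonal projection satisfies (P_M Φ)(ω) = P_{J(ω)}(Φ(ω)) for a.e. ω ∈ Ω. -/
open MeasureTheory
open scoped ComplexInnerProductSpace ENNReal

/-!
Membership in `J ω` almost everywhere survives `L²`-limits, since an `L²`-convergent sequence has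
an a.e.-convergent subsequence and each `J ω` is closed. The projection of `Φ` is
`Ψ ω = P_{J ω} (Φ ω)`, and its measurability is the point: as `‖P c‖² = Re ⟪P c, c⟫`,
`‖P c - b‖² = Re ⟪P c, c⟫ - 2 Re ⟪P c, b⟫ + ‖b‖²`, so the weak measurability of the range function
makes every distance `‖P_{J ω} c - b‖` measurable in `ω`, which suffices in the separable space `H`;
continuity in `c` then makes `(c, ω) ↦ P_{J ω} c` jointly measurable. Being pointwise
norm-decreasing, `Ψ` is in `L²`, and `Φ - Ψ` is pointwise orthogonal to `J ω`, hence to `M`.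
-/

open Filter TopologicalSpace Metric

lemma measurable_of_measurable_dist {Ω E : Type*} [MeasurableSpace Ω] [PseudoMetricSpace E]
    [SecondCountableTopology E] [MeasurableSpace E] [BorelSpace E] {f : Ω → E}
    (hf : ∀ b : E, Measurable fun ω => dist (f ω) b) : Measurable f := by
  have hballs : IsTopologicalBasis {s : Set E | ∃ b r, s = ball b r} := by
    refine isTopologicalBasis_of_isOpen_of_nhds (by rintro _ ⟨b, r, rfl⟩; exact isOpen_ball)
      fun a u ha hu => ?_
    obtain ⟨ε, hε, hsub⟩ := Metric.isOpen_iff.mp hu a ha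
    exact ⟨ball a ε, ⟨a, ε, rfl⟩, mem_ball_self hε, hsub⟩
  rw [BorelSpace.measurable_eq (α := E), hballs.borel_eq_generateFrom]
  refine measurable_generateFrom ?_
  rintro _ ⟨b, r, rfl⟩
  exact hf b measurableSet_Iio

namespace Submodule

variable {𝕜 H : Type*} [RCLike 𝕜] [NormedAddCommGroup H] [InnerProductSpace 𝕜 H]

lemma norm_starProjection_sub_sq (K : Submodule 𝕜 H) [K.HasOrthogonalProjection] (c b : H) :
    ‖K.starProjection c - b‖ ^ 2 =
      RCLike.re (inner 𝕜 (K.starProjection c) c)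
        - 2 * RCLike.re (inner 𝕜 (K.starProjection c) b) + ‖b‖ ^ 2 := by
  rw [norm_sub_sq (𝕜 := 𝕜), re_inner_starProjection_eq_normSq]
  rfl

end Submodule

section RangeFunction

variable {Ω 𝕜 H : Type*} [MeasurableSpace Ω] [RCLike 𝕜] [NormedAddCommGroup H]
  [InnerProductSpace 𝕜 H] [SecondCountableTopology H] {J : Ω → Submodule 𝕜 H}
  [∀ ω, (J ω).HasOrthogonalProjection]

lemma measurable_starProjection_apply_const [MeasurableSpace H] [BorelSpace H]
    (hJ : ∀ a b : H, Measurable fun ω => inner 𝕜 ((J ω).starProjection a) b) (c : H) :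
    Measurable fun ω => (J ω).starProjection c := by
  refine measurable_of_measurable_dist fun b => ?_
  have hdist : ∀ ω, dist ((J ω).starProjection c) b =
      √(RCLike.re (inner 𝕜 ((J ω).starProjection c) c)
        - 2 * RCLike.re (inner 𝕜 ((J ω).starProjection c) b) + ‖b‖ ^ 2) := fun ω => by
    rw [← Submodule.norm_starProjection_sub_sq, Real.sqrt_sq (norm_nonneg _), dist_eq_norm]
  simp_rw [hdist]
  exact (((RCLike.measurable_re.comp (hJ c c)).sub
    ((RCLike.measurable_re.comp (hJ c b)).const_mul 2)).add_const _).sqrt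

lemma measurable_uncurry_starProjection [MeasurableSpace H] [BorelSpace H]
    (hJ : ∀ a b : H, Measurable fun ω => inner 𝕜 ((J ω).starProjection a) b) :
    Measurable fun p : H × Ω => (J p.2).starProjection p.1 :=
  measurable_uncurry_of_continuous_of_measurable (u := fun c ω => (J ω).starProjection c)
    (fun ω => (J ω).starProjection.continuous) (measurable_starProjection_apply_const hJ)

lemma MeasureTheory.AEStronglyMeasurable.starProjection_apply {μ : Measure Ω} {f : Ω → H}
    (hJ : ∀ a b : H, Measurable fun ω => inner 𝕜 ((J ω).starProjection a) b)
    (hf : AEStronglyMeasurable f μ) :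
    AEStronglyMeasurable (fun ω => (J ω).starProjection (f ω)) μ := by
  borelize H
  exact ((measurable_uncurry_starProjection hJ).comp_aemeasurable
    (hf.aemeasurable.prodMk aemeasurable_id)).aestronglyMeasurable

lemma MeasureTheory.MemLp.starProjection_apply {μ : Measure Ω} {p : ℝ≥0∞} {f : Ω → H}
    (hJ : ∀ a b : H, Measurable fun ω => inner 𝕜 ((J ω).starProjection a) b)
    (hf : MemLp f p μ) :
    MemLp (fun ω => (J ω).starProjection (f ω)) p μ :=
  hf.of_le (hf.aestronglyMeasurable.starProjection_apply hJ)
    (ae_of_all _ fun ω => (J ω).norm_starProjection_apply_le (f ω))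

end RangeFunction

lemma MeasureTheory.Lp.isClosed_setOf_ae_mem {Ω E : Type*} [MeasurableSpace Ω]
    [NormedAddCommGroup E] {μ : Measure Ω} {p : ℝ≥0∞} [Fact (1 ≤ p)] {S : Ω → Set E}
    (hS : ∀ ω, IsClosed (S ω)) : IsClosed {f : Lp E p μ | ∀ᵐ ω ∂μ, f ω ∈ S ω} := by
  refine IsSeqClosed.isClosed fun f g hf hfg => ?_
  obtain ⟨ns, -, hae⟩ := (tendstoInMeasure_of_tendsto_Lp hfg).exists_seq_tendsto_ae
  have hmem : ∀ᵐ ω ∂μ, ∀ n, f n ω ∈ S ω := ae_all_iff.mpr hf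
  filter_upwards [hae, hmem] with ω hlim hω
  exact (hS ω).mem_of_tendsto hlim (Eventually.of_forall fun n => hω (ns n))

lemma MeasureTheory.L2.inner_sub_eq_zero_of_ae_eq_starProjection {Ω 𝕜 H : Type*}
    [MeasurableSpace Ω] [RCLike 𝕜] [NormedAddCommGroup H] [InnerProductSpace 𝕜 H]
    {μ : Measure Ω} {J : Ω → Submodule 𝕜 H} [∀ ω, (J ω).HasOrthogonalProjection]
    {Φ Ψ X : Lp H 2 μ} (hΨ : Ψ =ᵐ[μ] fun ω => (J ω).starProjection (Φ ω))
    (hX : ∀ᵐ ω ∂μ, X ω ∈ J ω) : inner 𝕜 (Φ - Ψ) X = 0 := by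
  rw [L2.inner_def, ← integral_zero Ω 𝕜]
  refine integral_congr_ae ?_
  filter_upwards [Lp.coeFn_sub Φ Ψ, hΨ, hX] with ω hsub hΨω hXω
  rw [hsub, Pi.sub_apply, hΨω]
  exact Submodule.inner_left_of_mem_orthogonal hXω ((J ω).sub_starProjection_mem_orthogonal _)

theorem rangeFunction_space_closed_and_pointwise_projection_general
    {Ω : Type*} [MeasurableSpace Ω] (μ : Measure Ω)
    {H : Type*} [NormedAddCommGroup H] [InnerProductSpace ℂ H]
    [SecondCountableTopology H]
    (J : Ω → Submodule ℂ H) [instJ : ∀ ω, CompleteSpace (J ω)]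
    (hJmeas : ∀ a b : H, Measurable fun ω => ⟪((J ω).orthogonalProjection a : H), b⟫)
    (M : Submodule ℂ (Lp H 2 μ))
    (hM : ∀ Φ : Lp H 2 μ, Φ ∈ M ↔ ∀ᵐ ω ∂μ, Φ ω ∈ J ω) :
    IsClosed (M : Set (Lp H 2 μ)) ∧
    ∀ Φ : Lp H 2 μ, ∃ Ψ ∈ M, (∀ X ∈ M, ⟪Φ - Ψ, X⟫ = 0) ∧
      ∀ᵐ ω ∂μ, Ψ ω = ((J ω).orthogonalProjection (Φ ω) : H) := by
  refine ⟨?_, fun Φ => ?_⟩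
  · rw [show (M : Set (Lp H 2 μ)) = {f | ∀ᵐ ω ∂μ, f ω ∈ J ω} from Set.ext hM]
    exact Lp.isClosed_setOf_ae_mem fun ω =>
      (completeSpace_coe_iff_isComplete.mp (instJ ω)).isClosed
  · have hPΦ := (Lp.memLp Φ).starProjection_apply hJmeas
    have hΨ := hPΦ.coeFn_toLp
    refine ⟨hPΦ.toLp _, (hM _).mpr ?_, fun X hX =>
      L2.inner_sub_eq_zero_of_ae_eq_starProjection hΨ ((hM X).mp hX), hΨ⟩
    filter_upwards [hΨ] with ω hω
    rw [hω]
    exact (J ω).starProjection_apply_mem (Φ ω)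

/-- Helson's lemma: for a measurable range function `J`, the set
`M = {Φ ∈ L²(Ω, H) : Φ(ω) ∈ J(ω) a.e.}` is a closed subspace and the orthogonal
projection onto `M` acts pointwise, `(P_M Φ)(ω) = P_{J(ω)}(Φ(ω))` a.e. (the projection
`P_M Φ` being characterized as the unique `Ψ ∈ M` with `Φ − Ψ ⟂ M`). -/
theorem rangeFunction_space_closed_and_pointwise_projection
    {Ω : Type*} [MeasurableSpace Ω] (μ : Measure Ω) [SigmaFinite μ]
    {H : Type*} [NormedAddCommGroup H] [InnerProductSpace ℂ H] [CompleteSpace H]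
    [SecondCountableTopology H]
    (J : Ω → Submodule ℂ H) [instJ : ∀ ω, CompleteSpace (J ω)]
    (hJmeas : ∀ a b : H, Measurable fun ω => ⟪((J ω).orthogonalProjection a : H), b⟫)
    (M : Submodule ℂ (Lp H 2 μ))
    (hM : ∀ Φ : Lp H 2 μ, Φ ∈ M ↔ ∀ᵐ ω ∂μ, Φ ω ∈ J ω) :
    IsClosed (M : Set (Lp H 2 μ)) ∧
    ∀ Φ : Lp H 2 μ, ∃ Ψ ∈ M, (∀ X ∈ M, ⟪Φ - Ψ, X⟫ = 0) ∧
      ∀ᵐ ω ∂μ, Ψ ω = ((J ω).orthogonalProjection (Φ ω) : H) :=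
  rangeFunction_space_closed_and_pointwise_projection_general μ J (instJ := instJ) hJmeas M hM
end

section
/- Let (Ω, μ) be a σ-finite measure space, H a separable Hilbert space decomposed as an orthogonal sum H = H₁ ⊕ ⋯ ⊕ H_κ, and M ⊆ L²(Ω, H) a closed subspace of the form M = {Φ : Φ(ω) ∈ J(ω) a.e.} for a measurable range function J. For each j define M_j = {ω ↦ P_{H_j}(Φ(ω)) : Φ ∈ M}. If M_j ⊆ M for all j, then each M_j is a closed subspace of L²(Ω, H) and M = M₁ ⊕ ⋯ ⊕ M_κ (orthogonal direct sum). -/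
open MeasureTheory
open scoped ComplexInnerProductSpace ENNReal

/-! The orthogonal projections `P_j` onto the `H_j` are idempotent and, the `H_j` being orthogonal
with dense span, sum to the identity; hence so do the operators `T_j Φ = P_j ∘ Φ` on `L²(Ω, H)`.
The hypothesis says `M_j = T_j M`, and `T_j M ⊆ M` makes `M_j = M ∩ Fix T_j`, which is closed
because `M` is: an `L²`-limit is an a.e. limit of a subsequence and each `J ω` is closed.
Writing `Φ = ∑ T_j Φ` gives `M = ⨆ M_j`, and `M_i ⟂ M_j` because their elements take values
a.e. in the orthogonal spaces `H_i`, `H_j`. -/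

theorem OrthogonalFamily.sum_starProjection_eq_id {𝕜 E ι : Type*} [RCLike 𝕜]
    [NormedAddCommGroup E] [InnerProductSpace 𝕜 E] [Fintype ι] {V : ι → Submodule 𝕜 E}
    [∀ i, CompleteSpace (V i)] (hV : OrthogonalFamily 𝕜 (fun i => V i) fun i => (V i).subtypeₗᵢ)
    (hdense : (iSup V).topologicalClosure = ⊤) :
    ∑ i, (V i).starProjection = ContinuousLinearMap.id 𝕜 E := by
  have hdense' : Dense ((iSup V : Submodule 𝕜 E) : Set E) :=
    Submodule.dense_iff_topologicalClosure_eq_top.mpr hdense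
  refine DFunLike.coe_injective ((map_continuous _).ext_on hdense' continuous_id fun x hx => ?_)
  simpa using hV.sum_projection_of_mem_iSup x hx

theorem Submodule.isClosed_map_of_idempotent {R E : Type*} [Semiring R] [TopologicalSpace E]
    [T2Space E] [AddCommMonoid E] [Module R E] {M : Submodule R E} (hM : IsClosed (M : Set E))
    {T : E →L[R] E} (hT : ∀ x, T (T x) = T x) (hTM : M.map (T : E →ₗ[R] E) ≤ M) :
    IsClosed (M.map (T : E →ₗ[R] E) : Set E) := by
  have hfix : (M.map (T : E →ₗ[R] E) : Set E) = (M : Set E) ∩ {x | T x = x} := by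
    ext x
    constructor
    · rintro ⟨y, hy, rfl⟩
      exact ⟨hTM ⟨y, hy, rfl⟩, hT y⟩
    · rintro ⟨hx, hTx⟩
      exact ⟨x, hx, hTx⟩
  rw [hfix]
  exact hM.inter (isClosed_eq T.continuous continuous_id)

theorem Submodule.le_iSup_map_of_sum_eq_self {R E ι : Type*} [Semiring R] [AddCommMonoid E]
    [Module R E] [Fintype ι] {T : ι → E →ₗ[R] E} (hT : ∀ x, ∑ i, T i x = x)
    (M : Submodule R E) : M ≤ ⨆ i, M.map (T i) := fun x hx =>
  hT x ▸ Submodule.sum_mem _ fun i _ => Submodule.mem_iSup_of_mem i ⟨x, hx, rfl⟩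

namespace MeasureTheory

variable {α E : Type*} [MeasurableSpace α] {μ : Measure α} {p : ℝ≥0∞} [NormedAddCommGroup E]

theorem Lp.isClosed_setOf_ae_mem_s10 [Fact (1 ≤ p)] {V : α → Set E} (hV : ∀ a, IsClosed (V a)) :
    IsClosed {f : Lp E p μ | ∀ᵐ a ∂μ, f a ∈ V a} := by
  refine IsSeqClosed.isClosed fun f g hf hfg => ?_
  obtain ⟨ns, -, hns⟩ := (tendstoInMeasure_of_tendsto_Lp hfg).exists_seq_tendsto_ae
  have hall : ∀ᵐ a ∂μ, ∀ k, f (ns k) a ∈ V a := ae_all_iff.mpr fun k => hf (ns k)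
  filter_upwards [hns, hall] with a hlim hmem
  exact (hV a).mem_of_tendsto hlim (Filter.Eventually.of_forall hmem)

theorem L2.inner_eq_zero_of_ae {𝕜 : Type*} [RCLike 𝕜] [InnerProductSpace 𝕜 E]
    {f g : Lp E 2 μ} (h : ∀ᵐ a ∂μ, inner 𝕜 (f a) (g a) = 0) : inner 𝕜 f g = 0 := by
  rw [L2.inner_def]
  exact integral_eq_zero_of_ae h

end MeasureTheory

namespace ContinuousLinearMap

variable {α E F G 𝕜 : Type*} [MeasurableSpace α] {μ : Measure α} {p : ℝ≥0∞}
  [NontriviallyNormedField 𝕜] [NormedAddCommGroup E] [NormedSpace 𝕜 E]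
  [NormedAddCommGroup F] [NormedSpace 𝕜 F] [NormedAddCommGroup G] [NormedSpace 𝕜 G]

theorem compLp_eq_iff (L : E →L[𝕜] F) (f : Lp E p μ) (g : Lp F p μ) :
    L.compLp f = g ↔ ∀ᵐ a ∂μ, g a = L (f a) := by
  constructor
  · rintro rfl
    exact L.coeFn_compLp f
  · intro h
    exact Lp.ext ((L.coeFn_compLp' f).trans (h.mono fun a ha => ha.symm))

theorem comp_compLp (L : F →L[𝕜] G) (L' : E →L[𝕜] F) (f : Lp E p μ) :
    (L.comp L').compLp f = L.compLp (L'.compLp f) := by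
  rw [compLp_eq_iff]
  filter_upwards [L.coeFn_compLp (L'.compLp f), L'.coeFn_compLp f] with a h h'
  rw [h, h', comp_apply]

theorem id_compLp (f : Lp E p μ) : (ContinuousLinearMap.id 𝕜 E).compLp f = f :=
  (compLp_eq_iff _ _ _).mpr (Filter.Eventually.of_forall fun _ => rfl)

theorem sum_compLp {ι : Type*} (s : Finset ι) (L : ι → E →L[𝕜] F) (f : Lp E p μ) :
    (∑ i ∈ s, L i).compLp f = ∑ i ∈ s, (L i).compLp f :=
  map_sum (AddMonoidHom.mk' (fun L : E →L[𝕜] F => L.compLp f) (add_compLp · · f)) L s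

end ContinuousLinearMap

theorem decomposable_MI_orthogonal_sum_general
    {Ω : Type*} [MeasurableSpace Ω] (μ : Measure Ω)
    {H : Type*} [NormedAddCommGroup H] [InnerProductSpace ℂ H]
    (κ : ℕ) (Hsub : Fin κ → Submodule ℂ H) [instH : ∀ i, CompleteSpace (Hsub i)]
    (horthH : ∀ i j, i ≠ j → ∀ x ∈ Hsub i, ∀ y ∈ Hsub j, ⟪x, y⟫ = 0)
    (hspan : (⨆ i, Hsub i).topologicalClosure = ⊤)
    (J : Ω → Submodule ℂ H) [instJ : ∀ ω, CompleteSpace (J ω)]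
    (M : Submodule ℂ (Lp H 2 μ))
    (hM : ∀ Φ : Lp H 2 μ, Φ ∈ M ↔ ∀ᵐ ω ∂μ, Φ ω ∈ J ω)
    (Mj : Fin κ → Submodule ℂ (Lp H 2 μ))
    (hMj : ∀ j (Ψ : Lp H 2 μ), Ψ ∈ Mj j ↔
      ∃ Φ ∈ M, ∀ᵐ ω ∂μ, Ψ ω = ((Hsub j).orthogonalProjectionOnto (Φ ω) : H))
    (hdec : ∀ j, Mj j ≤ M) :
    (∀ j, IsClosed (Mj j : Set (Lp H 2 μ))) ∧
    M = ⨆ j, Mj j ∧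
    (∀ i j, i ≠ j → ∀ Φ ∈ Mj i, ∀ Ψ ∈ Mj j, ⟪Φ, Ψ⟫ = 0) := by
  set P := fun j => (Hsub j).starProjection
  set T := fun j => (P j).compLpL 2 μ
  have hMj_eq_map : ∀ j, Mj j = M.map (T j : Lp H 2 μ →ₗ[ℂ] Lp H 2 μ) := fun j => by
    ext Ψ
    rw [hMj, Submodule.mem_map]
    exact exists_congr fun Φ => and_congr_right fun _ => ((P j).compLp_eq_iff Φ Ψ).symm
  have hMj_ae_mem : ∀ j, ∀ Ψ ∈ Mj j, ∀ᵐ ω ∂μ, Ψ ω ∈ Hsub j := fun j Ψ hΨ => by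
    obtain ⟨Φ, -, hΨ⟩ := (hMj j Ψ).mp hΨ
    filter_upwards [hΨ] with ω hω using hω ▸ (Hsub j).starProjection_apply_mem (Φ ω)
  have hM_closed : IsClosed (M : Set (Lp H 2 μ)) := by
    rw [show (M : Set (Lp H 2 μ)) = {Φ | ∀ᵐ ω ∂μ, Φ ω ∈ (J ω : Set H)} from Set.ext hM]
    exact Lp.isClosed_setOf_ae_mem_s10 fun ω =>
      (completeSpace_coe_iff_isComplete.mp (instJ ω)).isClosed
  have hT_idem : ∀ j Φ, T j (T j Φ) = T j Φ := fun j Φ => by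
    change (P j).compLp ((P j).compLp Φ) = (P j).compLp Φ
    rw [← ContinuousLinearMap.comp_compLp, ← ContinuousLinearMap.mul_def,
      (Hsub j).isIdempotentElem_starProjection.eq]
  have hT_sum : ∀ Φ, ∑ j, T j Φ = Φ := fun Φ => by
    change ∑ j, (P j).compLp Φ = Φ
    rw [← ContinuousLinearMap.sum_compLp, (OrthogonalFamily.of_pairwise fun i j hij =>
      Submodule.isOrtho_iff_inner_eq.mpr (horthH i j hij)).sum_starProjection_eq_id hspan,
      ContinuousLinearMap.id_compLp]
  refine ⟨fun j => ?_, ?_, fun i j hij Φ hΦ Ψ hΨ => ?_⟩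
  · rw [hMj_eq_map]
    exact Submodule.isClosed_map_of_idempotent hM_closed (hT_idem j) (hMj_eq_map j ▸ hdec j)
  · refine le_antisymm ?_ (iSup_le hdec)
    simp_rw [hMj_eq_map]
    exact M.le_iSup_map_of_sum_eq_self hT_sum
  · refine L2.inner_eq_zero_of_ae ?_
    filter_upwards [hMj_ae_mem i Φ hΦ, hMj_ae_mem j Ψ hΨ] with ω hΦω hΨω
    exact horthH i j hij _ hΦω _ hΨω

/-- If `H = H₁ ⊕ ⋯ ⊕ H_κ` orthogonally and a multiplicatively invariant space
`M = {Φ : Φ(ω) ∈ J(ω) a.e.} ⊆ L²(Ω, H)` is decomposable, i.e. each space `M_j` of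
pointwise `H_j`-projections of elements of `M` satisfies `M_j ⊆ M`, then each `M_j` is a
closed subspace and `M = M₁ ⊕ ⋯ ⊕ M_κ` is an orthogonal direct sum. -/
theorem decomposable_MI_orthogonal_sum
    {Ω : Type*} [MeasurableSpace Ω] (μ : Measure Ω) [SigmaFinite μ]
    {H : Type*} [NormedAddCommGroup H] [InnerProductSpace ℂ H] [CompleteSpace H]
    [SecondCountableTopology H]
    (κ : ℕ) (Hsub : Fin κ → Submodule ℂ H) [instH : ∀ i, CompleteSpace (Hsub i)]
    (horthH : ∀ i j, i ≠ j → ∀ x ∈ Hsub i, ∀ y ∈ Hsub j, ⟪x, y⟫ = 0)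
    (hspan : (⨆ i, Hsub i).topologicalClosure = ⊤)
    (J : Ω → Submodule ℂ H) [instJ : ∀ ω, CompleteSpace (J ω)]
    (hJmeas : ∀ a b : H, Measurable fun ω => ⟪((J ω).orthogonalProjectionOnto a : H), b⟫)
    (M : Submodule ℂ (Lp H 2 μ))
    (hM : ∀ Φ : Lp H 2 μ, Φ ∈ M ↔ ∀ᵐ ω ∂μ, Φ ω ∈ J ω)
    (Mj : Fin κ → Submodule ℂ (Lp H 2 μ))
    (hMj : ∀ j (Ψ : Lp H 2 μ), Ψ ∈ Mj j ↔
      ∃ Φ ∈ M, ∀ᵐ ω ∂μ, Ψ ω = ((Hsub j).orthogonalProjectionOnto (Φ ω) : H))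
    (hdec : ∀ j, Mj j ≤ M) :
    (∀ j, IsClosed (Mj j : Set (Lp H 2 μ))) ∧
    M = ⨆ j, Mj j ∧
    (∀ i j, i ≠ j → ∀ Φ ∈ Mj i, ∀ Ψ ∈ Mj j, ⟪Φ, Ψ⟫ = 0) :=
  decomposable_MI_orthogonal_sum_general μ κ Hsub (instH := instH) horthH hspan J (instJ := instJ) M
    hM Mj hMj hdec
end

section
/- Let (Ω, μ) be a σ-finite measure space, H a separable Hilbert space with orthogonal decomposition H = H₁ ⊕ ⋯ ⊕ H_κ, and M ⊆ L²(Ω, H) a closed subspace determined by a measurable range function J via M = {Φ : Φ(ω) ∈ J(ω) a.e.}. Then the following are equivalent: (i) for every j, the space M_j of pointwise H_j-projections of elements of M is contained in M; (ii) for every j, P_{H_j}(J(ω)) ⊆ J(ω) for a.e. ω ∈ Ω. -/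
/-!
Both conditions express invariance of `M` under the pointwise action of `P_{H_j}`, once on
`L²(Ω, H)` and once fibrewise, and fibrewise invariance clearly implies the other. Conversely,
the fields `ω ↦ 1_S(ω) P_{J(ω)} a`, for `S` of finite measure, lie in `M`; applying the
hypothesis to them with `S` running through the spanning sets of `μ` and `a` through a countable
dense subset of `H` gives `P_{H_j} P_{J(ω)} a ∈ J(ω)` for all such `a` off a single null set, and
by continuity for all `a ∈ H`. These fields are measurable since the distance from `P_{J(ω)} a`
to any `b` is given by `‖P_{J(ω)} a - b‖² = Re⟪P_{J(ω)} a, a⟫ - 2 Re⟪P_{J(ω)} a, b⟫ + ‖b‖²`,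
a measurable function of `ω` by measurability of `J`.
-/

open MeasureTheory
open scoped ComplexInnerProductSpace ENNReal

open Metric TopologicalSpace

theorem measurable_of_forall_measurable_dist {Ω β : Type*} [MeasurableSpace Ω]
    [PseudoMetricSpace β] [SecondCountableTopology β] [MeasurableSpace β] [BorelSpace β]
    {f : Ω → β} (h : ∀ b, Measurable fun ω => dist (f ω) b) : Measurable f := by
  refine measurable_of_isOpen fun U hU => ?_
  let ball' (p : {p : β × ℝ // ball p.1 p.2 ⊆ U}) := ball p.1.1 p.1.2
  have hU_eq : ⋃ p, ball' p = U := by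
    refine Set.iUnion_subset (fun p => p.2) |>.antisymm fun x hx => ?_
    obtain ⟨ε, hε, hball⟩ := Metric.isOpen_iff.1 hU x hx
    exact Set.mem_iUnion.2 ⟨⟨(x, ε), hball⟩, mem_ball_self hε⟩
  obtain ⟨T, hT, hTU⟩ := isOpen_iUnion_countable ball' fun _ => isOpen_ball
  rw [← hU_eq, ← hTU, Set.preimage_iUnion₂]
  exact .biUnion hT fun p _ => h p.1.1 measurableSet_Iio

theorem forall_ae_eq_comp_mem_iff {Ω E 𝕜 : Type*} [MeasurableSpace Ω] {μ : Measure Ω}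
    [NontriviallyNormedField 𝕜] [NormedAddCommGroup E] [NormedSpace 𝕜 E] {p : ℝ≥0∞}
    {M : Submodule 𝕜 (Lp E p μ)} (T : E →L[𝕜] E) :
    (∀ Φ ∈ M, ∀ Ψ : Lp E p μ, (∀ᵐ ω ∂μ, Ψ ω = T (Φ ω)) → Ψ ∈ M) ↔
      ∀ Φ ∈ M, T.compLp Φ ∈ M := by
  refine ⟨fun h Φ hΦ => h Φ hΦ _ (T.coeFn_compLp Φ), fun h Φ hΦ Ψ hΨ => ?_⟩
  have hΨ_eq : Ψ = T.compLp Φ := Lp.ext <| by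
    filter_upwards [hΨ, T.coeFn_compLp Φ] with ω hΨω hcomp
    rw [hΨω, hcomp]
  exact hΨ_eq ▸ h Φ hΦ

namespace Submodule

variable {𝕜 E : Type*} [RCLike 𝕜] [NormedAddCommGroup E] [InnerProductSpace 𝕜 E]
  (K : Submodule 𝕜 E) [K.HasOrthogonalProjection]

open RCLike in
theorem norm_starProjection_sub_sq_s11 (a b : E) :
    ‖K.starProjection a - b‖ ^ 2 =
      re (inner 𝕜 (K.starProjection a) a) - 2 * re (inner 𝕜 (K.starProjection a) b) + ‖b‖ ^ 2 := by
  rw [norm_sub_sq (𝕜 := 𝕜), re_inner_starProjection_eq_normSq]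
  rfl

variable {K} in
theorem map_le_of_denseRange (T : E →L[𝕜] E) {ι : Type*} {d : ι → E} (hd : DenseRange d)
    (h : ∀ i, T (K.starProjection (d i)) ∈ K) : K.map (T : E →ₗ[𝕜] E) ≤ K := by
  have hall (x : E) : T (K.starProjection x) ∈ K := by
    refine hd.induction_on (p := fun x => T (K.starProjection x) ∈ K) x ?_ h
    simp_rw [← K.starProjection_eq_self_iff]
    exact isClosed_eq (by fun_prop) (by fun_prop)
  rintro _ ⟨x, hx, rfl⟩
  simpa [K.starProjection_eq_self_iff.2 hx] using hall x

end Submodule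

section RangeFunction

variable {Ω 𝕜 E : Type*} [MeasurableSpace Ω] [RCLike 𝕜] [NormedAddCommGroup E]
  [InnerProductSpace 𝕜 E]

def IsMeasurableRangeFunction (J : Ω → Submodule 𝕜 E) [∀ ω, (J ω).HasOrthogonalProjection] :
    Prop :=
  ∀ a b : E, Measurable fun ω => inner 𝕜 ((J ω).starProjection a) b

variable {J : Ω → Submodule 𝕜 E} [∀ ω, (J ω).HasOrthogonalProjection]

theorem IsMeasurableRangeFunction.measurable_starProjection_apply [SecondCountableTopology E]
    [MeasurableSpace E] [BorelSpace E] (hJ : IsMeasurableRangeFunction J) (a : E) :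
    Measurable fun ω => (J ω).starProjection a := by
  refine measurable_of_forall_measurable_dist fun b => ?_
  have hdist : (fun ω => dist ((J ω).starProjection a) b) =
      fun ω => √(‖(J ω).starProjection a - b‖ ^ 2) :=
    funext fun ω => by rw [Real.sqrt_sq (norm_nonneg _), dist_eq_norm]
  simp_rw [hdist, Submodule.norm_starProjection_sub_sq_s11]
  exact (((hJ a a).re.sub ((hJ a b).re.const_mul 2)).add_const _).sqrt

variable {μ : Measure Ω} {M : Submodule 𝕜 (Lp E 2 μ)}

theorem IsMeasurableRangeFunction.ae_mem_of_forall_compLp_mem [SecondCountableTopology E]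
    (hJ : IsMeasurableRangeFunction J) (hM : ∀ Φ : Lp E 2 μ, Φ ∈ M ↔ ∀ᵐ ω ∂μ, Φ ω ∈ J ω)
    {T : E →L[𝕜] E} (hT : ∀ Φ ∈ M, T.compLp Φ ∈ M) {S : Set Ω} (hS : MeasurableSet S)
    (hμS : μ S ≠ ∞) (a : E) : ∀ᵐ ω ∂μ, ω ∈ S → T ((J ω).starProjection a) ∈ J ω := by
  borelize E
  set f := S.indicator fun ω => (J ω).starProjection a
  have hf : MemLp f 2 μ := by
    refine (memLp_indicator_iff_restrict hS).2 ?_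
    have : IsFiniteMeasure (μ.restrict S) := isFiniteMeasure_restrict.2 hμS
    exact .of_bound (hJ.measurable_starProjection_apply a).aestronglyMeasurable ‖a‖
      (ae_of_all _ fun ω => (J ω).norm_starProjection_apply_le a)
  have hfM : hf.toLp f ∈ M := (hM _).2 <| by
    filter_upwards [hf.coeFn_toLp] with ω hω
    by_cases hωS : ω ∈ S <;> simp [hω, f, hωS, Submodule.starProjection_apply_mem]
  filter_upwards [(hM _).1 (hT _ hfM), T.coeFn_compLp (hf.toLp f), hf.coeFn_toLp]
    with ω hmem hcomp hω hωS
  rwa [hcomp, hω, show f ω = _ from Set.indicator_of_mem hωS _] at hmem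

theorem IsMeasurableRangeFunction.forall_compLp_mem_iff [SecondCountableTopology E]
    [SigmaFinite μ] (hJ : IsMeasurableRangeFunction J)
    (hM : ∀ Φ : Lp E 2 μ, Φ ∈ M ↔ ∀ᵐ ω ∂μ, Φ ω ∈ J ω) (T : E →L[𝕜] E) :
    (∀ Φ ∈ M, T.compLp Φ ∈ M) ↔ ∀ᵐ ω ∂μ, (J ω).map (T : E →ₗ[𝕜] E) ≤ J ω := by
  refine ⟨fun hT => ?_, fun h Φ hΦ => ?_⟩
  · have hae (n k : ℕ) := hJ.ae_mem_of_forall_compLp_mem hM hT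
      (measurableSet_spanningSets μ n) (measure_spanningSets_lt_top μ n).ne (denseSeq E k)
    filter_upwards [ae_all_iff.2 fun n => ae_all_iff.2 (hae n)] with ω hω
    exact Submodule.map_le_of_denseRange T (denseRange_denseSeq E)
      fun k => hω _ k (mem_spanningSetsIndex μ ω)
  · refine (hM _).2 ?_
    filter_upwards [h, (hM Φ).1 hΦ, T.coeFn_compLp Φ] with ω hle hmem hcomp
    exact hcomp ▸ hle (Submodule.mem_map_of_mem hmem)

end RangeFunction

theorem decomposable_MI_iff_range_function_general
    {Ω : Type*} [MeasurableSpace Ω] (μ : Measure Ω) [SigmaFinite μ]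
    {H : Type*} [NormedAddCommGroup H] [InnerProductSpace ℂ H]
    [SecondCountableTopology H]
    (κ : ℕ) (Hsub : Fin κ → Submodule ℂ H) [instH : ∀ i, CompleteSpace (Hsub i)]
    (J : Ω → Submodule ℂ H) [instJ : ∀ ω, CompleteSpace (J ω)]
    (hJmeas : ∀ a b : H, Measurable fun ω => ⟪(Submodule.orthogonalProjectionOnto (J ω) a : H), b⟫)
    (M : Submodule ℂ (Lp H 2 μ))
    (hM : ∀ Φ : Lp H 2 μ, Φ ∈ M ↔ ∀ᵐ ω ∂μ, Φ ω ∈ J ω) :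
    (∀ j, ∀ Φ ∈ M, ∀ Ψ : Lp H 2 μ,
        (∀ᵐ ω ∂μ, Ψ ω = (Submodule.orthogonalProjectionOnto (Hsub j) (Φ ω) : H)) → Ψ ∈ M)
      ↔ (∀ j, ∀ᵐ ω ∂μ,
          (J ω).map (((Hsub j).subtypeL.comp
            (Submodule.orthogonalProjectionOnto (Hsub j))).toLinearMap) ≤ J ω) :=
  forall_congr' fun j => (forall_ae_eq_comp_mem_iff (Hsub j).starProjection).trans
    ((show IsMeasurableRangeFunction J from hJmeas).forall_compLp_mem_iff hM _)

/-- Characterization of decomposable MI spaces via range functions: for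
`M = {Φ : Φ(ω) ∈ J(ω) a.e.} ⊆ L²(Ω, H)` and an orthogonal decomposition
`H = H₁ ⊕ ⋯ ⊕ H_κ`, the pointwise `H_j`-projections of elements of `M` belong to `M`
for every `j` iff `P_{H_j}(J(ω)) ⊆ J(ω)` for a.e. `ω`, for every `j`. -/
theorem decomposable_MI_iff_range_function
    {Ω : Type*} [MeasurableSpace Ω] (μ : Measure Ω) [SigmaFinite μ]
    {H : Type*} [NormedAddCommGroup H] [InnerProductSpace ℂ H] [CompleteSpace H]
    [SecondCountableTopology H]
    (κ : ℕ) (Hsub : Fin κ → Submodule ℂ H) [instH : ∀ i, CompleteSpace (Hsub i)]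
    (horthH : ∀ i j, i ≠ j → ∀ x ∈ Hsub i, ∀ y ∈ Hsub j, ⟪x, y⟫ = 0)
    (hspan : (⨆ i, Hsub i).topologicalClosure = ⊤)
    (J : Ω → Submodule ℂ H) [instJ : ∀ ω, CompleteSpace (J ω)]
    (hJmeas : ∀ a b : H, Measurable fun ω => ⟪(Submodule.orthogonalProjectionOnto (J ω) a : H), b⟫)
    (M : Submodule ℂ (Lp H 2 μ))
    (hM : ∀ Φ : Lp H 2 μ, Φ ∈ M ↔ ∀ᵐ ω ∂μ, Φ ω ∈ J ω) :
    (∀ j, ∀ Φ ∈ M, ∀ Ψ : Lp H 2 μ,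
        (∀ᵐ ω ∂μ, Ψ ω = (Submodule.orthogonalProjectionOnto (Hsub j) (Φ ω) : H)) → Ψ ∈ M)
      ↔ (∀ j, ∀ᵐ ω ∂μ,
          (J ω).map (((Hsub j).subtypeL.comp
            (Submodule.orthogonalProjectionOnto (Hsub j))).toLinearMap) ≤ J ω) :=
  decomposable_MI_iff_range_function_general μ κ Hsub (instH := instH) J (instJ := instJ) hJmeas M
    hM
end

section
/- Let (Ω, μ) be a σ-finite measure space, H a separable Hilbert space, D ⊆ L^∞(Ω) a determining set for L¹(Ω), and A ⊆ L²(Ω, H) at most countable. Let M_D(A) be the closed linear span of {gΦ : g ∈ D, Φ ∈ A}. Suppose H = H₁ ⊕ ⋯ ⊕ H_κ orthogonally, M := M_D(A) satisfies M_j ⊆ M for all j (where M_j is the set of pointwise H_j-projections of elements of M). Then M_j = M_D(P_j(A)), where P_j(A) = {ω ↦ P_{H_j}(Φ(ω)) : Φ ∈ A}. -/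
open MeasureTheory
open scoped ComplexInnerProductSpace ENNReal

/-! The pointwise projection `Φ ↦ P_{H_j} ∘ Φ` is a continuous idempotent on `L²(Ω, H)` that
commutes with multiplication by scalar functions. Hence it maps `M_D(A)` into `M_D(P_j(A))`, and
it fixes `M_D(P_j(A))` pointwise. Decomposability puts the generators `g P_j Φ = P_j (g Φ)` of
`M_D(P_j(A))` back into `M`, so every element of `M_D(P_j(A))` is its own projection and lies
in `M_j`. -/

/-- The MI space `M_D(B)` generated by a set `B ⊆ L²(Ω, H)` with respect to a set
`D ⊆ L^∞(Ω)` of multipliers: the closed linear span of `{gΦ : g ∈ D, Φ ∈ B}`. -/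
noncomputable def MDspan {Ω : Type*} [MeasurableSpace Ω] (μ : MeasureTheory.Measure Ω)
    {H : Type*} [NormedAddCommGroup H] [InnerProductSpace ℂ H]
    (D : Set (Ω → ℂ)) (B : Set (Lp H 2 μ)) : Submodule ℂ (Lp H 2 μ) :=
  (Submodule.span ℂ
    {Ψ : Lp H 2 μ | ∃ g ∈ D, ∃ Φ ∈ B, ∀ᵐ ω ∂μ, Ψ ω = g ω • Φ ω}).topologicalClosure

section compLpL

variable {α 𝕜 E F : Type*} [MeasurableSpace α] {μ : Measure α} {p : ℝ≥0∞} [Fact (1 ≤ p)]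
  [NontriviallyNormedField 𝕜] [NormedAddCommGroup E] [NormedSpace 𝕜 E]
  [NormedAddCommGroup F] [NormedSpace 𝕜 F]

theorem ContinuousLinearMap.ae_eq_apply_iff_eq_compLpL (L : E →L[𝕜] F) (Φ : Lp E p μ)
    (Ψ : Lp F p μ) : (∀ᵐ ω ∂μ, Ψ ω = L (Φ ω)) ↔ Ψ = L.compLpL p μ Φ := by
  have hL := L.coeFn_compLpL (p := p) (μ := μ) Φ
  rw [Lp.ext_iff]
  exact ⟨fun h => Filter.EventuallyEq.trans h hL.symm, fun h => Filter.EventuallyEq.trans h hL⟩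

theorem ContinuousLinearMap.compLpL_ae_eq_smul (L : E →L[𝕜] F) {g : α → 𝕜} {Φ Ψ : Lp E p μ}
    (h : ∀ᵐ ω ∂μ, Ψ ω = g ω • Φ ω) :
    ∀ᵐ ω ∂μ, L.compLpL p μ Ψ ω = g ω • L.compLpL p μ Φ ω := by
  filter_upwards [h, L.coeFn_compLpL Ψ, L.coeFn_compLpL Φ] with ω hΨ hLΨ hLΦ
  rw [hLΨ, hLΦ, hΨ, L.map_smul]

theorem IsIdempotentElem.compLpL {P : E →L[𝕜] E} (hP : IsIdempotentElem P) :
    IsIdempotentElem (P.compLpL p μ) := by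
  refine ContinuousLinearMap.ext fun Φ => Lp.ext ?_
  filter_upwards [P.coeFn_compLpL (P.compLpL p μ Φ), P.coeFn_compLpL Φ] with ω h1 h2
  rw [mul_apply_eq_comp, h1, h2]
  exact DFunLike.congr_fun hP.eq (Φ ω)

end compLpL

section MDspan

variable {Ω : Type*} [MeasurableSpace Ω] {μ : Measure Ω}
  {H K : Type*} [NormedAddCommGroup H] [InnerProductSpace ℂ H]
  [NormedAddCommGroup K] [InnerProductSpace ℂ K] {D : Set (Ω → ℂ)} {B : Set (Lp H 2 μ)}

theorem mem_MDspan_of_ae_eq_smul {g : Ω → ℂ} (hg : g ∈ D) {Φ : Lp H 2 μ} (hΦ : Φ ∈ B)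
    {Ψ : Lp H 2 μ} (hΨ : ∀ᵐ ω ∂μ, Ψ ω = g ω • Φ ω) : Ψ ∈ MDspan μ D B :=
  Submodule.le_topologicalClosure _ (Submodule.subset_span ⟨g, hg, Φ, hΦ, hΨ⟩)

theorem MDspan_le {N : Submodule ℂ (Lp H 2 μ)} (hN : IsClosed (N : Set (Lp H 2 μ)))
    (h : ∀ g ∈ D, ∀ Φ ∈ B, ∀ Ψ : Lp H 2 μ, (∀ᵐ ω ∂μ, Ψ ω = g ω • Φ ω) → Ψ ∈ N) :
    MDspan μ D B ≤ N :=
  Submodule.topologicalClosure_minimal _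
    (Submodule.span_le.mpr fun _ ⟨g, hg, Φ, hΦ, hΨ⟩ => h g hg Φ hΦ _ hΨ) hN

theorem exists_mem_MDspan_ae_eq_smul {g : Ω → ℂ} (hg_mem : MemLp g ∞ μ) (hg : g ∈ D)
    {Φ : Lp H 2 μ} (hΦ : Φ ∈ B) : ∃ Θ ∈ MDspan μ D B, ∀ᵐ ω ∂μ, Θ ω = g ω • Φ ω :=
  let hgΦ : MemLp (g • (Φ : Ω → H)) 2 μ := (Lp.memLp Φ).smul hg_mem
  ⟨hgΦ.toLp _, mem_MDspan_of_ae_eq_smul hg hΦ hgΦ.coeFn_toLp, hgΦ.coeFn_toLp⟩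

theorem compLpL_mem_MDspan_image (P : H →L[ℂ] K) {Φ : Lp H 2 μ} (hΦ : Φ ∈ MDspan μ D B) :
    P.compLpL 2 μ Φ ∈ MDspan μ D (P.compLpL 2 μ '' B) := by
  set T := P.compLpL 2 μ
  refine MDspan_le (N := (MDspan μ D (T '' B)).comap (T : Lp H 2 μ →ₗ[ℂ] Lp K 2 μ))
    ((Submodule.isClosed_topologicalClosure _).preimage T.continuous) ?_ hΦ
  intro g hg Φ' hΦ' Ψ hΨ
  exact mem_MDspan_of_ae_eq_smul hg (Set.mem_image_of_mem T hΦ') (P.compLpL_ae_eq_smul hΨ)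

theorem compLpL_eq_self_of_mem_MDspan (P : H →L[ℂ] H) (hB : ∀ Φ ∈ B, P.compLpL 2 μ Φ = Φ)
    {Ψ : Lp H 2 μ} (hΨ : Ψ ∈ MDspan μ D B) : P.compLpL 2 μ Ψ = Ψ := by
  refine MDspan_le
    (N := LinearMap.eqLocus (P.compLpL 2 μ : Lp H 2 μ →ₗ[ℂ] Lp H 2 μ) LinearMap.id)
    (isClosed_eq (P.compLpL 2 μ).continuous continuous_id) ?_ hΨ
  intro g hg Φ hΦ Ψ' hΨ'
  change P.compLpL 2 μ Ψ' = Ψ'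
  refine Lp.ext ?_
  filter_upwards [P.compLpL_ae_eq_smul hΨ', hΨ', Lp.ext_iff.mp (hB Φ hΦ)] with ω h1 h2 h3
  rw [h1, h2, h3]

theorem MDspan_image_compLpL_le (P : H →L[ℂ] H) (hD : ∀ g ∈ D, MemLp g ∞ μ)
    (hinv : ∀ Φ ∈ MDspan μ D B, P.compLpL 2 μ Φ ∈ MDspan μ D B) :
    MDspan μ D (P.compLpL 2 μ '' B) ≤ MDspan μ D B := by
  refine MDspan_le (Submodule.isClosed_topologicalClosure _) ?_
  rintro g hg _ ⟨Φ, hΦ, rfl⟩ Ψ hΨ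
  obtain ⟨Θ, hΘ, hΘg⟩ := exists_mem_MDspan_ae_eq_smul (hD g hg) hg hΦ
  have hΨΘ : Ψ = P.compLpL 2 μ Θ :=
    Lp.ext (Filter.EventuallyEq.trans hΨ (Filter.EventuallyEq.symm (P.compLpL_ae_eq_smul hΘg)))
  exact hΨΘ ▸ hinv Θ hΘ

theorem image_compLpL_MDspan {P : H →L[ℂ] H} (hP : IsIdempotentElem P)
    (hD : ∀ g ∈ D, MemLp g ∞ μ)
    (hinv : ∀ Φ ∈ MDspan μ D B, P.compLpL 2 μ Φ ∈ MDspan μ D B) :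
    P.compLpL 2 μ '' MDspan μ D B = MDspan μ D (P.compLpL 2 μ '' B) := by
  refine subset_antisymm ?_ fun Ψ hΨ => ⟨Ψ, MDspan_image_compLpL_le P hD hinv hΨ, ?_⟩
  · rintro _ ⟨Φ, hΦ, rfl⟩
    exact compLpL_mem_MDspan_image P hΦ
  · refine compLpL_eq_self_of_mem_MDspan P ?_ hΨ
    rintro _ ⟨Φ, -, rfl⟩
    exact DFunLike.congr_fun hP.compLpL.eq Φ

end MDspan

theorem decomposable_MI_generators_general
    {Ω : Type*} [MeasurableSpace Ω] (μ : Measure Ω)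
    {H : Type*} [NormedAddCommGroup H] [InnerProductSpace ℂ H]
    (κ : ℕ) (Hsub : Fin κ → Submodule ℂ H) [instH : ∀ i, CompleteSpace (Hsub i)]
    (D : Set (Ω → ℂ)) (hD_mem : ∀ g ∈ D, MemLp g ∞ μ)
    (A : Set (Lp H 2 μ))
    (M : Submodule ℂ (Lp H 2 μ)) (hMA : M = MDspan μ D A)
    (hdec : ∀ (j : Fin κ), ∀ Φ ∈ M, ∀ Ψ : Lp H 2 μ,
      (∀ᵐ ω ∂μ, Ψ ω = ((Hsub j).orthogonalProjectionOnto (Φ ω) : H)) → Ψ ∈ M) :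
    ∀ (j : Fin κ) (Ψ : Lp H 2 μ),
      (∃ Φ ∈ M, ∀ᵐ ω ∂μ, Ψ ω = ((Hsub j).orthogonalProjectionOnto (Φ ω) : H))
        ↔ Ψ ∈ MDspan μ D
            {Ψ' : Lp H 2 μ | ∃ Φ ∈ A,
              ∀ᵐ ω ∂μ, Ψ' ω = ((Hsub j).orthogonalProjectionOnto (Φ ω) : H)} := by
  intro j Ψ
  subst hMA
  set P := (Hsub j).starProjection
  have hP (Φ Ψ : Lp H 2 μ) :
      (∀ᵐ ω ∂μ, Ψ ω = ((Hsub j).orthogonalProjectionOnto (Φ ω) : H)) ↔ Ψ = P.compLpL 2 μ Φ :=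
    P.ae_eq_apply_iff_eq_compLpL Φ Ψ
  have hgen : {Ψ' : Lp H 2 μ | ∃ Φ ∈ A,
      ∀ᵐ ω ∂μ, Ψ' ω = ((Hsub j).orthogonalProjectionOnto (Φ ω) : H)} = P.compLpL 2 μ '' A := by
    ext Ψ'
    simp only [Set.mem_ofPred_eq, hP, Set.mem_image, eq_comm]
  rw [hgen, ← SetLike.mem_coe, ← image_compLpL_MDspan (P := P)
    (Hsub j).isIdempotentElem_starProjection hD_mem fun Φ hΦ => hdec j Φ hΦ _ ((hP Φ _).mpr rfl)]
  simp only [hP, eq_comm, Set.mem_image, SetLike.mem_coe]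

/-- If `M = M_D(A)` is decomposable with respect to an orthogonal decomposition
`H = H₁ ⊕ ⋯ ⊕ H_κ` (i.e. pointwise `H_j`-projections of elements of `M` remain in `M`),
then `M_j = M_D(P_j(A))`, where `P_j(A)` is the set of pointwise `H_j`-projections of the
generators. -/
theorem decomposable_MI_generators
    {Ω : Type*} [MeasurableSpace Ω] (μ : Measure Ω) [SigmaFinite μ]
    {H : Type*} [NormedAddCommGroup H] [InnerProductSpace ℂ H] [CompleteSpace H]
    [SecondCountableTopology H]
    (κ : ℕ) (Hsub : Fin κ → Submodule ℂ H) [instH : ∀ i, CompleteSpace (Hsub i)]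
    (horthH : ∀ i j, i ≠ j → ∀ x ∈ Hsub i, ∀ y ∈ Hsub j, ⟪x, y⟫ = 0)
    (hspan : (⨆ i, Hsub i).topologicalClosure = ⊤)
    (D : Set (Ω → ℂ)) (hD_mem : ∀ g ∈ D, MemLp g ∞ μ)
    (hD_det : ∀ f : Ω → ℂ, Integrable f μ →
      (∀ g ∈ D, ∫ ω, f ω * g ω ∂μ = 0) → f =ᵐ[μ] 0)
    (A : Set (Lp H 2 μ)) (hA : A.Countable)
    (M : Submodule ℂ (Lp H 2 μ)) (hMA : M = MDspan μ D A)
    (hdec : ∀ (j : Fin κ), ∀ Φ ∈ M, ∀ Ψ : Lp H 2 μ,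
      (∀ᵐ ω ∂μ, Ψ ω = ((Hsub j).orthogonalProjectionOnto (Φ ω) : H)) → Ψ ∈ M) :
    ∀ (j : Fin κ) (Ψ : Lp H 2 μ),
      (∃ Φ ∈ M, ∀ᵐ ω ∂μ, Ψ ω = ((Hsub j).orthogonalProjectionOnto (Φ ω) : H))
        ↔ Ψ ∈ MDspan μ D
            {Ψ' : Lp H 2 μ | ∃ Φ ∈ A,
              ∀ᵐ ω ∂μ, Ψ' ω = ((Hsub j).orthogonalProjectionOnto (Φ ω) : H)} :=
  decomposable_MI_generators_general μ κ Hsub (instH := instH) D hD_mem A M hMA hdec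
end

section
/- Let G be a second countable locally compact abelian group and V ⊆ L²(G) a closed subspace. Then V is invariant under all translations (T_x f ∈ V for every f ∈ V and x ∈ G, where T_x f(y) = f(y − x)) if and only if there exists a measurable set E ⊆ Ĝ such that V = {f ∈ L²(G) : f̂ = 0 a.e. on E}. -/
/-!
Transport `V` by the Plancherel isometry `𝓕` to a closed subspace `W ⊆ L²(Ĝ)`; translation
invariance of `V` becomes invariance of `W` under multiplication by the characters. For `F ∈ W`
and `K ∈ Wᗮ` all the integrals `∫ conj K · F · e_x = ⟪K, e_x F⟫` then vanish, so `conj K · F = 0`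
a.e. by uniqueness: `F` and `K` have a.e. disjoint supports. Since `L²(Ĝ)` is separable, `Wᗮ` has
a countable dense subset, and the union `E` of the supports of its members is measurable. Every
element of `W` vanishes on `E`, every element of `Wᗮ` vanishes off `E`, hence `W = Wᗮᗮ` is the
space of functions vanishing on `E`. The converse is immediate from the intertwining relation.
-/

open MeasureTheory
open scoped ENNReal

namespace MeasureTheory.Lp

variable {α : Type*} [MeasurableSpace α]

section VanishingOn

variable {𝕜 E : Type*} [NormedField 𝕜] [NormedAddCommGroup E] [NormedSpace 𝕜 E]
  {p : ℝ≥0∞} (μ : Measure α)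

variable (𝕜) in
def vanishingOn (s : Set α) : Submodule 𝕜 (Lp E p μ) where
  carrier := {f | ∀ᵐ a ∂μ, a ∈ s → f a = 0}
  zero_mem' := by
    filter_upwards [Lp.coeFn_zero E p μ] with a ha _ using ha
  add_mem' {f g} hf hg := by
    filter_upwards [hf, hg, Lp.coeFn_add f g] with a hfa hga hfg has
    rw [hfg, Pi.add_apply, hfa has, hga has, add_zero]
  smul_mem' c f hf := by
    filter_upwards [hf, Lp.coeFn_smul c f] with a hfa hcf has
    rw [hcf, Pi.smul_apply, hfa has, smul_zero]

variable {μ}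

theorem mem_vanishingOn {s : Set α} {f : Lp E p μ} :
    f ∈ vanishingOn 𝕜 μ s ↔ ∀ᵐ a ∂μ, a ∈ s → f a = 0 :=
  Iff.rfl

theorem isClosed_vanishingOn [Fact (1 ≤ p)] {s : Set α} (hs : MeasurableSet s) :
    IsClosed ((vanishingOn 𝕜 μ s : Submodule 𝕜 (Lp E p μ)) : Set (Lp E p μ)) := by
  convert (LpToLpRestrictCLM α E 𝕜 μ p s).isClosed_ker using 1
  ext f
  simp only [SetLike.mem_coe, mem_vanishingOn, LinearMap.mem_ker, Lp.eq_zero_iff_ae_eq_zero]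
  rw [← ae_restrict_iff' hs]
  have hf := LpToLpRestrictCLM_coeFn 𝕜 s f
  exact ⟨hf.trans, hf.symm.trans⟩

end VanishingOn

variable {𝕜 : Type*} [RCLike 𝕜] {ν : Measure α}

theorem inner_eq_zero_of_mem_vanishingOn_compl {E : Type*} [NormedAddCommGroup E]
    [InnerProductSpace 𝕜 E] {s : Set α} {f g : Lp E 2 ν}
    (hf : f ∈ vanishingOn 𝕜 ν s) (hg : g ∈ vanishingOn 𝕜 ν sᶜ) : inner 𝕜 g f = 0 := by
  rw [L2.inner_def]
  refine integral_eq_zero_of_ae ?_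
  filter_upwards [hf, hg] with a hfa hga
  by_cases has : a ∈ s
  · simp [hfa has]
  · simp [hga has]

theorem ae_eq_zero_or_eq_zero_of_forall_mul_mem {ι : Type*} {e : ι → α → 𝕜}
    (hdet : ∀ F : α → 𝕜, Integrable F ν → (∀ i, ∫ a, F a * e i a ∂ν = 0) → F =ᵐ[ν] 0)
    {W : Submodule 𝕜 (Lp 𝕜 2 ν)} (hW : ∀ f ∈ W, ∀ i, ∃ f' ∈ W, ∀ᵐ a ∂ν, f' a = e i a * f a)
    {f g : Lp 𝕜 2 ν} (hf : f ∈ W) (hg : g ∈ Wᗮ) : ∀ᵐ a ∂ν, g a = 0 ∨ f a = 0 := by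
  have hzero := hdet _ (L2.integrable_inner g f) fun i => by
    obtain ⟨f', hf', hf'e⟩ := hW f hf i
    calc ∫ a, inner 𝕜 (g a) (f a) * e i a ∂ν = ∫ a, inner 𝕜 (g a) (f' a) ∂ν := by
          refine integral_congr_ae ?_
          filter_upwards [hf'e] with a ha
          rw [ha, ← smul_eq_mul (e i a), inner_smul_right, mul_comm]
      _ = inner 𝕜 g f' := (L2.inner_def g f').symm
      _ = 0 := Submodule.inner_left_of_mem_orthogonal hf' hg
  filter_upwards [hzero] with a ha
  simpa [or_comm] using ha

theorem exists_eq_vanishingOn_of_ae_disjoint_orthogonal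
    [TopologicalSpace.SeparableSpace (Lp 𝕜 2 ν)]
    {W : Submodule 𝕜 (Lp 𝕜 2 ν)} (hW : IsClosed (W : Set (Lp 𝕜 2 ν)))
    (hdisj : ∀ f ∈ W, ∀ g ∈ Wᗮ, ∀ᵐ a ∂ν, g a = 0 ∨ f a = 0) :
    ∃ s, MeasurableSet s ∧ W = vanishingOn 𝕜 ν s := by
  obtain ⟨t, htW, htc, hWt⟩ := (TopologicalSpace.IsSeparable.of_separableSpace
    (Wᗮ : Set (Lp 𝕜 2 ν))).exists_countable_dense_subset
  set s := ⋃ g ∈ t, Function.support (g : α → 𝕜)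
  have hs : MeasurableSet s :=
    .biUnion htc fun g _ => measurableSet_support (Lp.stronglyMeasurable g).measurable
  have horth_le : Wᗮ ≤ vanishingOn 𝕜 ν sᶜ := by
    have ht : t ⊆ (vanishingOn 𝕜 ν sᶜ : Submodule 𝕜 (Lp 𝕜 2 ν)) := fun g hg =>
      mem_vanishingOn.2 <| ae_of_all _ fun a (has : a ∈ sᶜ) =>
        Function.notMem_support.1 fun hga => has (Set.mem_biUnion hg hga)
    exact hWt.trans (closure_minimal ht (isClosed_vanishingOn hs.compl))
  refine ⟨s, hs, le_antisymm (fun f hf => ?_) ?_⟩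
  · have hft : ∀ᵐ a ∂ν, ∀ g ∈ t, (g : α → 𝕜) a = 0 ∨ f a = 0 :=
      (ae_ball_iff htc).2 fun g hg => hdisj f hf g (htW hg)
    filter_upwards [hft] with a ha has
    obtain ⟨g, hg, hga⟩ := Set.mem_iUnion₂.1 has
    exact (ha g hg).resolve_left hga
  · have : CompleteSpace W := hW.completeSpace_coe
    rw [← W.orthogonal_orthogonal]
    exact fun f hf g hg => inner_eq_zero_of_mem_vanishingOn_compl hf (horth_le hg)

end MeasureTheory.Lp

theorem wiener_translation_invariant_iff_general
    {G : Type*} [AddCommGroup G] [TopologicalSpace G]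
    [LocallyCompactSpace G] [SecondCountableTopology G]
    [MeasurableSpace G] [BorelSpace G]
    (μ : Measure G) [μ.IsAddHaarMeasure]
    {Gh : Type*} [MeasurableSpace Gh] (ν : Measure Gh)
    (T : G → (Lp ℂ 2 μ ≃ₗᵢ[ℂ] Lp ℂ 2 μ))
    (e : G → Gh → ℂ)
    (hdet : ∀ F : Gh → ℂ, Integrable F ν →
      (∀ x : G, ∫ γ, F γ * e x γ ∂ν = 0) → F =ᵐ[ν] 0)
    (𝓕 : Lp ℂ 2 μ ≃ₗᵢ[ℂ] Lp ℂ 2 ν)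
    (h𝓕 : ∀ (x : G) (f : Lp ℂ 2 μ),
      ∀ᵐ γ ∂ν, (𝓕 (T x f)) γ = e (-x) γ * (𝓕 f) γ)
    (V : Submodule ℂ (Lp ℂ 2 μ)) (hV : IsClosed (V : Set (Lp ℂ 2 μ))) :
    (∀ (x : G), ∀ f ∈ V, T x f ∈ V)
      ↔ ∃ E : Set Gh, MeasurableSet E ∧
          ∀ f : Lp ℂ 2 μ, f ∈ V ↔ ∀ᵐ γ ∂ν, γ ∈ E → (𝓕 f) γ = 0 := by
  have : Fact ((2 : ℝ≥0∞) ≠ ∞) := ⟨ENNReal.ofNat_ne_top⟩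
  have : SecondCountableTopology (Lp ℂ 2 ν) :=
    𝓕.toHomeomorph.symm.isEmbedding.secondCountableTopology
  constructor
  · intro hinv
    set W := V.comap (𝓕.symm : Lp ℂ 2 ν →ₗ[ℂ] Lp ℂ 2 μ)
    have hVW : ∀ f, f ∈ V ↔ 𝓕 f ∈ W := by simp [W]
    have hmul : ∀ F ∈ W, ∀ x, ∃ F' ∈ W, ∀ᵐ γ ∂ν, F' γ = e x γ * F γ := fun F hF x =>
      ⟨𝓕 (T (-x) (𝓕.symm F)), (hVW _).1 (hinv _ _ hF), by simpa using h𝓕 (-x) (𝓕.symm F)⟩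
    obtain ⟨E, hE, hWE⟩ := Lp.exists_eq_vanishingOn_of_ae_disjoint_orthogonal
      (hV.preimage 𝓕.symm.continuous)
      fun F hF K hK => Lp.ae_eq_zero_or_eq_zero_of_forall_mul_mem hdet hmul hF hK
    exact ⟨E, hE, fun f => (hVW f).trans (by rw [hWE, Lp.mem_vanishingOn])⟩
  · rintro ⟨E, -, hVE⟩ x f hf
    rw [hVE] at hf ⊢
    filter_upwards [hf, h𝓕 x f] with γ hfγ hTγ hγE
    rw [hTγ, hfγ hγE, mul_zero]

/-- Wiener's theorem for `L²` of a second countable LCA group `G`: a closed subspace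
`V ⊆ L²(G)` is invariant under all translations iff there is a measurable set `E` in the
dual such that `V = {f : 𝓕 f = 0 a.e. on E}`.  The dual group is modelled abstractly by a
measure space `Gh` with the characters `e x`, and the Fourier–Plancherel transform by a
linear isometric isomorphism `𝓕 : L²(G) ≃ L²(Gh)` intertwining translation with
multiplication by characters. -/
theorem wiener_translation_invariant_iff
    {G : Type*} [AddCommGroup G] [TopologicalSpace G] [IsTopologicalAddGroup G]
    [LocallyCompactSpace G] [SecondCountableTopology G]
    [MeasurableSpace G] [BorelSpace G]
    (μ : Measure G) [μ.IsAddHaarMeasure]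
    {Gh : Type*} [MeasurableSpace Gh] (ν : Measure Gh) [SigmaFinite ν]
    (T : G → (Lp ℂ 2 μ ≃ₗᵢ[ℂ] Lp ℂ 2 μ))
    (hT : ∀ (x : G) (f : Lp ℂ 2 μ), ∀ᵐ y ∂μ, (T x f) y = f (y - x))
    (e : G → Gh → ℂ) (he_meas : ∀ x, Measurable (e x))
    (he_norm : ∀ x γ, ‖e x γ‖ = 1)
    (he_hom : ∀ x y γ, e (x + y) γ = e x γ * e y γ)
    (hdet : ∀ F : Gh → ℂ, Integrable F ν →
      (∀ x : G, ∫ γ, F γ * e x γ ∂ν = 0) → F =ᵐ[ν] 0)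
    (𝓕 : Lp ℂ 2 μ ≃ₗᵢ[ℂ] Lp ℂ 2 ν)
    (h𝓕 : ∀ (x : G) (f : Lp ℂ 2 μ),
      ∀ᵐ γ ∂ν, (𝓕 (T x f)) γ = e (-x) γ * (𝓕 f) γ)
    (V : Submodule ℂ (Lp ℂ 2 μ)) (hV : IsClosed (V : Set (Lp ℂ 2 μ))) :
    (∀ (x : G), ∀ f ∈ V, T x f ∈ V)
      ↔ ∃ E : Set Gh, MeasurableSet E ∧
          ∀ f : Lp ℂ 2 μ, f ∈ V ↔ ∀ᵐ γ ∂ν, γ ∈ E → (𝓕 f) γ = 0 :=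
  wiener_translation_invariant_iff_general μ ν T e hdet 𝓕 h𝓕 V hV
end

section
/- Let G be a second countable LCA group. Suppose P : L²(Ĝ) → L²(Ĝ) is an orthogonal projection whose range is invariant under multiplication by all characters e_x (x ∈ G), where e_x(γ) = (x, γ). Then f · conj(Pg) = Pf · conj(g) almost everywhere for all f, g ∈ L²(Ĝ), and consequently P is given by multiplication by the indicator function of a measurable set: there is a measurable E ⊆ Ĝ with Pf = χ_{E^c} f for all f ∈ L²(Ĝ). -/
open MeasureTheory
open scoped ComplexInnerProductSpace ENNReal

/-!
Multiplication by a character `e x` is unitary with adjoint multiplication by `e (-x)`; both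
preserve the range of the self-adjoint `P`, so `P` commutes with them. Hence
`∫ (f · conj (P g) - P f · conj g) · e x = ⟪P g, e x · f⟫ - ⟪g, e x · P f⟫ = 0` for every `x`,
and since the characters determine integrable functions, the integrand vanishes a.e.

For the second part, test that identity against some `w ∈ L²` vanishing nowhere (which exists
by σ-finiteness): `P f = m · f` with `m = conj (P w / w)`, and `P² = P` makes `m` idempotent,
i.e. `{0, 1}`-valued.
-/

section InnerProductSpace

open scoped InnerProductSpace

variable {𝕜 E : Type*} [RCLike 𝕜] [NormedAddCommGroup E] [InnerProductSpace 𝕜 E]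

theorem inner_apply_comm_of_range_invariant {P U V : E → E}
    (hP : ∀ f g, ⟪P f, g⟫_𝕜 = ⟪f, P g⟫_𝕜) (hUV : ∀ f g, ⟪f, U g⟫_𝕜 = ⟪V f, g⟫_𝕜)
    (hU : ∀ f, P (U (P f)) = U (P f)) (hV : ∀ f, P (V (P f)) = V (P f)) (f g : E) :
    ⟪P g, U f⟫_𝕜 = ⟪g, U (P f)⟫_𝕜 :=
  calc ⟪P g, U f⟫_𝕜 = ⟪P (V (P g)), f⟫_𝕜 := by rw [hUV, hV]
    _ = ⟪P g, U (P f)⟫_𝕜 := by rw [hP, hUV]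
    _ = ⟪g, U (P f)⟫_𝕜 := by rw [hP, hU]

end InnerProductSpace

theorem conj_eq_apply_neg_of_norm_eq_one {G : Type*} [AddGroup G] {χ : G → ℂ}
    (hnorm : ∀ x, ‖χ x‖ = 1) (hadd : ∀ x y, χ (x + y) = χ x * χ y) (x : G) :
    starRingEnd ℂ (χ x) = χ (-x) := by
  have hne : ∀ x, χ x ≠ 0 := fun x h => by simpa [h] using hnorm x
  have hzero : χ 0 = 1 :=
    (mul_eq_left₀ (hne 0)).mp (by rw [← hadd, add_zero])
  have hinv : χ (-x) = (χ x)⁻¹ :=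
    eq_inv_of_mul_eq_one_right (by rw [← hadd, add_neg_cancel, hzero])
  rw [hinv, Complex.inv_def, Complex.normSq_eq_norm_sq, hnorm]
  simp

section Multiplier

variable {α : Type*} [MeasurableSpace α] {μ : Measure α}

theorem integrable_mul_conj (f h : Lp ℂ 2 μ) :
    Integrable (fun a => f a * starRingEnd ℂ (h a)) μ :=
  (L2.integrable_inner (𝕜 := ℂ) h f).congr <| .of_forall fun a => by
    simp only [RCLike.inner_apply]

theorem memLp_mul_of_norm_le_one {p : ℝ≥0∞} {u : α → ℂ} (hu : Measurable u)
    (hu1 : ∀ a, ‖u a‖ ≤ 1) (f : Lp ℂ p μ) : MemLp (fun a => u a * f a) p μ :=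
  (Lp.memLp f).of_le (hu.aestronglyMeasurable.mul (Lp.aestronglyMeasurable f)) <|
    .of_forall fun a => by
      rw [norm_mul]
      exact mul_le_of_le_one_left (norm_nonneg _) (hu1 a)

noncomputable def mulL2 (u : α → ℂ) (hu : Measurable u) (hu1 : ∀ a, ‖u a‖ ≤ 1)
    (f : Lp ℂ 2 μ) : Lp ℂ 2 μ :=
  (memLp_mul_of_norm_le_one hu hu1 f).toLp _

variable {u : α → ℂ} (hu : Measurable u) (hu1 : ∀ a, ‖u a‖ ≤ 1)
include hu hu1

theorem coeFn_mulL2 (f : Lp ℂ 2 μ) : mulL2 u hu hu1 f =ᵐ[μ] fun a => u a * f a :=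
  MemLp.coeFn_toLp _

theorem inner_mulL2_right (h f : Lp ℂ 2 μ) :
    ⟪h, mulL2 u hu hu1 f⟫ = ∫ a, f a * starRingEnd ℂ (h a) * u a ∂μ := by
  rw [L2.inner_def]
  refine integral_congr_ae ?_
  filter_upwards [coeFn_mulL2 hu hu1 f] with a ha
  rw [RCLike.inner_apply, ha]
  ring

theorem inner_mulL2_left (h f : Lp ℂ 2 μ) :
    ⟪mulL2 u hu hu1 h, f⟫ = ∫ a, f a * starRingEnd ℂ (h a) * starRingEnd ℂ (u a) ∂μ := by
  rw [L2.inner_def]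
  refine integral_congr_ae ?_
  filter_upwards [coeFn_mulL2 hu hu1 h] with a ha
  rw [RCLike.inner_apply, ha, map_mul]
  ring

theorem integrable_mul_conj_mul (f h : Lp ℂ 2 μ) :
    Integrable (fun a => f a * starRingEnd ℂ (h a) * u a) μ :=
  (integrable_mul_conj f h).mul_bdd hu.aestronglyMeasurable (.of_forall hu1)

end Multiplier

theorem mul_conj_apply_ae_eq_of_char_invariant {G α : Type*} [AddGroup G] [MeasurableSpace α]
    {ν : Measure α} (e : G → α → ℂ) (he_meas : ∀ x, Measurable (e x))
    (he_norm : ∀ x γ, ‖e x γ‖ = 1) (he_hom : ∀ x y γ, e (x + y) γ = e x γ * e y γ)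
    (hdet : ∀ F : α → ℂ, Integrable F ν → (∀ x : G, ∫ γ, F γ * e x γ ∂ν = 0) → F =ᵐ[ν] 0)
    (P : Lp ℂ 2 ν → Lp ℂ 2 ν) (hsa : ∀ f g : Lp ℂ 2 ν, ⟪P f, g⟫ = ⟪f, P g⟫)
    (hinv : ∀ (x : G) (f : Lp ℂ 2 ν), ∀ Ψ : Lp ℂ 2 ν,
      (∀ᵐ γ ∂ν, Ψ γ = e x γ * (P f) γ) → P Ψ = Ψ) (f g : Lp ℂ 2 ν) :
    (fun γ => f γ * starRingEnd ℂ (P g γ)) =ᵐ[ν] fun γ => P f γ * starRingEnd ℂ (g γ) := by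
  have he1 x γ : ‖e x γ‖ ≤ 1 := (he_norm x γ).le
  let U x : Lp ℂ 2 ν → Lp ℂ 2 ν := mulL2 (e x) (he_meas x) (he1 x)
  have hU x f : P (U x (P f)) = U x (P f) := hinv x f _ (coeFn_mulL2 _ _ _)
  have hUV x h k : ⟪h, U x k⟫ = ⟪U (-x) h, k⟫ := by
    simp only [U, inner_mulL2_right, inner_mulL2_left,
      conj_eq_apply_neg_of_norm_eq_one (he_norm · _) (he_hom · · _), neg_neg]
  refine (hdet _ ((integrable_mul_conj f (P g)).sub (integrable_mul_conj (P f) g)) fun x => ?_).mono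
    fun γ hγ => sub_eq_zero.mp hγ
  simp only [Pi.sub_apply, sub_mul]
  rw [integral_sub (integrable_mul_conj_mul (he_meas x) (he1 x) _ _)
      (integrable_mul_conj_mul (he_meas x) (he1 x) _ _),
    ← inner_mulL2_right (he_meas x) (he1 x), ← inner_mulL2_right (he_meas x) (he1 x),
    inner_apply_comm_of_range_invariant hsa (hUV x) (hU x) (hU (-x)), sub_self]

theorem exists_Lp_two_ae_ne_zero {α : Type*} [MeasurableSpace α] (μ : Measure α) [SigmaFinite μ] :
    ∃ w : Lp ℂ 2 μ, ∀ᵐ a ∂μ, w a ≠ 0 := by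
  obtain ⟨g, hg_pos, hg_meas, hg_int⟩ := exists_pos_lintegral_lt_of_sigmaFinite μ one_ne_zero
  let w a : ℂ := Real.sqrt (g a)
  have hw_meas : Measurable w :=
    Complex.measurable_ofReal.comp (Real.continuous_sqrt.measurable.comp hg_meas.coe_nnreal_real)
  have hw_sq a : ‖w a‖ ^ 2 = (g a : ℝ≥0∞).toReal := by
    simp [w, Complex.norm_real, Real.sq_sqrt]
  have hw : MemLp w 2 μ := by
    rw [memLp_two_iff_integrable_sq_norm hw_meas.aestronglyMeasurable, funext hw_sq]
    exact integrable_toReal_of_lintegral_ne_top hg_meas.coe_nnreal_ennreal.aemeasurable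
      (hg_int.trans ENNReal.one_lt_top).ne
  refine ⟨hw.toLp w, (hw.coeFn_toLp).mono fun a ha => ?_⟩
  rw [ha]
  simpa [w] using (hg_pos a).ne'

theorem exists_ae_eq_indicator_of_mul_conj_ae_eq {α : Type*} [MeasurableSpace α] {ν : Measure α}
    [SigmaFinite ν] (P : Lp ℂ 2 ν → Lp ℂ 2 ν) (hidem : ∀ f, P (P f) = P f)
    (hcomm : ∀ f g : Lp ℂ 2 ν,
      (fun γ => f γ * starRingEnd ℂ (P g γ)) =ᵐ[ν] fun γ => P f γ * starRingEnd ℂ (g γ)) :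
    ∃ E : Set α, MeasurableSet E ∧ ∀ f : Lp ℂ 2 ν, ∀ᵐ γ ∂ν, P f γ = Eᶜ.indicator f γ := by
  obtain ⟨w, hw⟩ := exists_Lp_two_ae_ne_zero ν
  let m γ := starRingEnd ℂ (P w γ / w γ)
  have hm_meas : Measurable m := Complex.continuous_conj.measurable.comp
    ((Lp.stronglyMeasurable _).measurable.div (Lp.stronglyMeasurable _).measurable)
  have hPm f : ∀ᵐ γ ∂ν, P f γ = m γ * f γ := by
    filter_upwards [hcomm f w, hw] with γ hγ hwγ
    have hw_conj : starRingEnd ℂ (w γ) ≠ 0 := by simpa using hwγ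
    simp only [m, map_div₀]
    field_simp
    linear_combination -hγ
  have hm_idem : ∀ᵐ γ ∂ν, IsIdempotentElem (m γ) := by
    filter_upwards [hPm (P w), hPm w, hw] with γ hPPw hPw hwγ
    rw [hidem, hPw, ← mul_assoc] at hPPw
    exact (mul_left_inj' hwγ).mp hPPw.symm
  refine ⟨(m ⁻¹' {1})ᶜ, (hm_meas (measurableSet_singleton 1)).compl, fun f => ?_⟩
  filter_upwards [hPm f, hm_idem] with γ hγ hmγ
  rw [compl_compl, hγ]
  rcases IsIdempotentElem.iff_eq_zero_or_one.mp hmγ with h | h <;> simp [Set.indicator, h]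

/-- Key step of Wiener's theorem: if `P` is an orthogonal projection on `L²(Ĝ)` whose
range is invariant under multiplication by all characters `e_x` (`x ∈ G`), then
`f ⋅ conj(Pg) = Pf ⋅ conj(g)` a.e. for all `f, g ∈ L²(Ĝ)` and `P` is multiplication by
the indicator function of the complement of a measurable set `E`. -/
theorem projection_commutes_with_characters
    (G : Type*) [AddCommGroup G]
    {Gh : Type*} [MeasurableSpace Gh] (ν : Measure Gh) [SigmaFinite ν]
    (e : G → Gh → ℂ) (he_meas : ∀ x, Measurable (e x))
    (he_norm : ∀ x γ, ‖e x γ‖ = 1)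
    (he_hom : ∀ x y γ, e (x + y) γ = e x γ * e y γ)
    (hdet : ∀ F : Gh → ℂ, Integrable F ν →
      (∀ x : G, ∫ γ, F γ * e x γ ∂ν = 0) → F =ᵐ[ν] 0)
    (P : Lp ℂ 2 ν →L[ℂ] Lp ℂ 2 ν)
    (hidem : ∀ f, P (P f) = P f)
    (hsa : ∀ f g : Lp ℂ 2 ν, ⟪P f, g⟫ = ⟪f, P g⟫)
    (hinv : ∀ (x : G) (f : Lp ℂ 2 ν), ∀ Ψ : Lp ℂ 2 ν,
      (∀ᵐ γ ∂ν, Ψ γ = e x γ * (P f) γ) → P Ψ = Ψ) :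
    (∀ f g : Lp ℂ 2 ν,
      (fun γ => f γ * (starRingEnd ℂ) ((P g) γ))
        =ᵐ[ν] fun γ => (P f) γ * (starRingEnd ℂ) (g γ)) ∧
    ∃ E : Set Gh, MeasurableSet E ∧
      ∀ f : Lp ℂ 2 ν, ∀ᵐ γ ∂ν, (P f) γ = Set.indicator Eᶜ (⇑f) γ := by
  have hcomm := mul_conj_apply_ae_eq_of_char_invariant e he_meas he_norm he_hom hdet P hsa hinv
  exact ⟨hcomm, exists_ae_eq_indicator_of_mul_conj_ae_eq P hidem hcomm⟩
end

section
/- Let (Ω, μ) be a measure space with μ(Ω) < ∞, H a separable Hilbert space, and F₁, …, F_m ∈ L²(Ω, H). Define the Gramian G_F(ω) ∈ ℂ^{m×m} by (G_F(ω))_{ij} = ⟨F_i(ω), F_j(ω)⟩_H. Let λ_j(ω) denote its eigenvalues and y_j(ω) orthonormal left eigenvectors, depending measurably on ω. For fixed j define Φ_j(ω) = λ_j(ω)^{−1/2} Σ_{i=1}^m conj(y_{ji}(ω)) F_i(ω) if λ_j(ω) ≠ 0 and Φ_j(ω) = 0 otherwise. Then Φ_j ∈ L²(Ω, H), and in fact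 ∫_Ω ‖Φ_j(ω)‖²_H dμ(ω) = μ({ω : λ_j(ω) > 0}) ≤ μ(Ω). -/
open MeasureTheory
open scoped ComplexInnerProductSpace ENNReal

/-! If `y` is a unit left eigenvector of the Gramian of `v₁, …, v_m` for the eigenvalue `λ`, then
`‖Σ_i conj(y_i) v_i‖² = y G_F y* = λ`. Hence `λ ≥ 0`, and after dividing by `√λ` the vector
`Φ_j(ω)` has norm `1` where `λ_j(ω) > 0` and is `0` elsewhere, so `‖Φ_j‖²` is the indicator of
`{λ_j > 0}`; its integral is the measure of that set. -/

section Gram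

variable {𝕜 E ι : Type*} [RCLike 𝕜] [NormedAddCommGroup E] [InnerProductSpace 𝕜 E] [Fintype ι]

theorem inner_sum_conj_smul_self (v : ι → E) (c : ι → 𝕜) :
    inner 𝕜 (∑ i, starRingEnd 𝕜 (c i) • v i) (∑ i, starRingEnd 𝕜 (c i) • v i) =
      ∑ k, starRingEnd 𝕜 (c k) * ∑ i, c i * inner 𝕜 (v i) (v k) := by
  simp only [inner_sum, sum_inner, inner_smul_right, inner_smul_left, RCLike.conj_conj]

theorem norm_sq_sum_conj_smul_of_left_eigenvector {v : ι → E} {c : ι → 𝕜} {l : ℝ}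
    (heig : ∀ i, ∑ k, c k * inner 𝕜 (v k) (v i) = l * c i)
    (hc : ∑ k, c k * starRingEnd 𝕜 (c k) = 1) :
    ‖∑ i, starRingEnd 𝕜 (c i) • v i‖ ^ 2 = l := by
  have hinner : inner 𝕜 (∑ i, starRingEnd 𝕜 (c i) • v i) (∑ i, starRingEnd 𝕜 (c i) • v i) =
      (l : 𝕜) := by
    calc _ = ∑ k, (l : 𝕜) * (c k * starRingEnd 𝕜 (c k)) := by
          rw [inner_sum_conj_smul_self]
          exact Finset.sum_congr rfl fun k _ => by rw [heig k]; ring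
      _ = l := by rw [← Finset.mul_sum, hc, mul_one]
  exact_mod_cast (inner_self_eq_norm_sq_to_K (𝕜 := 𝕜) _).symm.trans hinner

end Gram

section Normalization

variable {E : Type*} [NormedAddCommGroup E] [NormedSpace ℂ E]

theorem norm_sq_ite_inv_sqrt_smul {x : E} {l : ℝ} (hx : ‖x‖ ^ 2 = l) :
    ‖if l ≠ 0 then ((Real.sqrt l)⁻¹ : ℂ) • x else 0‖ ^ 2 = if 0 < l then 1 else 0 := by
  have hl : 0 ≤ l := hx ▸ sq_nonneg _
  rcases hl.eq_or_lt with rfl | hpos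
  · simp
  · rw [if_pos hpos.ne', if_pos hpos, norm_smul, mul_pow, hx, norm_inv, Complex.norm_real,
      Real.norm_of_nonneg (Real.sqrt_nonneg l), inv_pow, Real.sq_sqrt hl, inv_mul_cancel₀ hpos.ne']

theorem MeasureTheory.AEStronglyMeasurable.ite_inv_sqrt_smul {Ω : Type*} [MeasurableSpace Ω]
    {μ : Measure Ω} {l : Ω → ℝ} (hl : Measurable l) {g : Ω → E}
    (hg : AEStronglyMeasurable g μ) :
    AEStronglyMeasurable
      (fun ω => if l ω ≠ 0 then ((Real.sqrt (l ω))⁻¹ : ℂ) • g ω else 0) μ := by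
  have hsmul : AEStronglyMeasurable (fun ω => ((Real.sqrt (l ω))⁻¹ : ℂ) • g ω) μ :=
    (Measurable.aestronglyMeasurable (by fun_prop)).smul hg
  convert hsmul.indicator (hl (measurableSet_singleton 0)).compl using 1
  ext ω
  by_cases h : l ω = 0 <;> simp [h]

end Normalization

theorem generator_in_L2_general
    {Ω : Type*} [MeasurableSpace Ω] (μ : Measure Ω) [IsFiniteMeasure μ]
    {H : Type*} [NormedAddCommGroup H] [InnerProductSpace ℂ H]
    (m : ℕ) (F : Fin m → Ω → H) (hF : ∀ i, MemLp (F i) 2 μ)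
    (lam : Fin m → Ω → ℝ) (hlam_meas : ∀ j, Measurable (lam j))
    (y : Fin m → Ω → Fin m → ℂ) (hy_meas : ∀ j i, Measurable fun ω => y j ω i)
    (heig : ∀ᵐ ω ∂μ, ∀ j i : Fin m,
      ∑ k, y j ω k * ⟪F k ω, F i ω⟫ = (lam j ω : ℂ) * y j ω i)
    (horth : ∀ᵐ ω ∂μ, ∀ j j' : Fin m,
      ∑ k, y j ω k * (starRingEnd ℂ) (y j' ω k) = if j = j' then 1 else 0)
    (j : Fin m) (Φ : Ω → H)
    (hΦ : ∀ ω, Φ ω = if lam j ω ≠ 0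
      then ((Real.sqrt (lam j ω))⁻¹ : ℂ) •
        ∑ i, (starRingEnd ℂ) (y j ω i) • F i ω
      else 0) :
    MemLp Φ 2 μ ∧
    ∫ ω, ‖Φ ω‖ ^ 2 ∂μ = (μ {ω | 0 < lam j ω}).toReal ∧
    (μ {ω | 0 < lam j ω}).toReal ≤ (μ Set.univ).toReal := by
  set s : Set Ω := {ω | 0 < lam j ω}
  have hs : MeasurableSet s := measurableSet_lt measurable_const (hlam_meas j)
  have hnorm_sq : ∀ᵐ ω ∂μ, ‖Φ ω‖ ^ 2 = s.indicator 1 ω := by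
    filter_upwards [heig, horth] with ω hω_eig hω_orth
    rw [hΦ, norm_sq_ite_inv_sqrt_smul (norm_sq_sum_conj_smul_of_left_eigenvector (hω_eig j)
      ((hω_orth j j).trans (if_pos rfl)))]
    rfl
  have hmeas : AEStronglyMeasurable Φ μ := by
    rw [funext hΦ]
    exact AEStronglyMeasurable.ite_inv_sqrt_smul (hlam_meas j)
      (Finset.aestronglyMeasurable_fun_sum _ fun i _ =>
        (hy_meas j i).aestronglyMeasurable.star.smul (hF i).1)
  refine ⟨(memLp_two_iff_integrable_sq_norm hmeas).2 ?_, ?_, measureReal_mono (Set.subset_univ s)⟩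
  · exact (integrable_congr hnorm_sq).2 ((integrable_const 1).indicator hs)
  · rw [integral_congr_ae hnorm_sq, integral_indicator_one hs]
    rfl

/-- The normalized generators built from the Gramian of a finite data set
`F₁, …, F_m ∈ L²(Ω, H)` belong to `L²(Ω, H)`: if `λ_j(ω)` are the eigenvalues and
`y_j(ω)` measurable orthonormal left eigenvectors of the Gramian
`(G_F(ω))_{ik} = ⟨F_i(ω), F_k(ω)⟩`, and
`Φ_j(ω) = λ_j(ω)^{-1/2} Σ_i conj(y_{ji}(ω)) F_i(ω)` (with `Φ_j(ω) = 0` when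
`λ_j(ω) = 0`), then `∫ ‖Φ_j(ω)‖² dμ = μ({λ_j > 0}) ≤ μ(Ω) < ∞`. -/
theorem generator_in_L2
    {Ω : Type*} [MeasurableSpace Ω] (μ : Measure Ω) [IsFiniteMeasure μ]
    {H : Type*} [NormedAddCommGroup H] [InnerProductSpace ℂ H] [CompleteSpace H]
    [SecondCountableTopology H]
    (m : ℕ) (F : Fin m → Ω → H) (hF : ∀ i, MemLp (F i) 2 μ)
    (lam : Fin m → Ω → ℝ) (hlam_meas : ∀ j, Measurable (lam j))
    (y : Fin m → Ω → Fin m → ℂ) (hy_meas : ∀ j i, Measurable fun ω => y j ω i)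
    (heig : ∀ᵐ ω ∂μ, ∀ j i : Fin m,
      ∑ k, y j ω k * ⟪F k ω, F i ω⟫ = (lam j ω : ℂ) * y j ω i)
    (horth : ∀ᵐ ω ∂μ, ∀ j j' : Fin m,
      ∑ k, y j ω k * (starRingEnd ℂ) (y j' ω k) = if j = j' then 1 else 0)
    (j : Fin m) (Φ : Ω → H)
    (hΦ : ∀ ω, Φ ω = if lam j ω ≠ 0
      then ((Real.sqrt (lam j ω))⁻¹ : ℂ) •
        ∑ i, (starRingEnd ℂ) (y j ω i) • F i ω
      else 0) :
    MemLp Φ 2 μ ∧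
    ∫ ω, ‖Φ ω‖ ^ 2 ∂μ = (μ {ω | 0 < lam j ω}).toReal ∧
    (μ {ω | 0 < lam j ω}).toReal ≤ (μ Set.univ).toReal :=
  generator_in_L2_general μ m F hF lam hlam_meas y hy_meas heig horth j Φ hΦ
end
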